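/- arXiv:2503.15152 — 2 statements merged into one kernel-verified Lean document; each statement's English description precedes it below -/
import Mathlib

section
/- Let 1 < p < ∞ and r > 0. Let Ω ⊂ ℝ² be the logarithmic cusp domain Ω_r and let u = (u₁, u₂) ∈ (W^{1,p}_0(Ω))². Set ξ(x) := x(−ln x)^{−r} and define, for a.e. x ∈ (0, 1/2), A(x) := ∫_{−ξ(x)}^{ξ(x)} u₁(x,y) dy. Then the function x ↦ A(x) / ( x^{(2p−1)/p} (−ln x)^{−r(2p−1)/p} ) belongs to L^p((0, 1/2)). -/
open MeasureTheory Real Set Filter Topology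

noncomputable section

/-- A smooth test function compactly supported inside `Ω`. -/
def TestFun {E : Type*} [NormedAddCommGroup E] [NormedSpace ℝ E] (Ω : Set E) (φ : E → ℝ) : Prop :=
  ContDiff ℝ (⊤ : ℕ∞) φ ∧ HasCompactSupport φ ∧ tsupport φ ⊆ Ω

/-- `f` belongs to `W^{1,p}_0(Ω)` with weak differential `df`: `f` and all directional weak
derivatives are in `L^p(Ω)`, `df` is the weak differential of `f` on `Ω`, and `f` together with
`df` is the limit, in the `W^{1,p}` norm, of smooth functions compactly supported in `Ω`. -/
def MemW1p0 {E : Type*} [NormedAddCommGroup E] [NormedSpace ℝ E] [MeasureSpace E]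
    (p : ℝ) (Ω : Set E) (f : E → ℝ) (df : E → E →L[ℝ] ℝ) : Prop :=
  MemLp f (ENNReal.ofReal p) (volume.restrict Ω) ∧
  (∀ v : E, MemLp (fun x => df x v) (ENNReal.ofReal p) (volume.restrict Ω)) ∧
  (∀ φ : E → ℝ, TestFun Ω φ → ∀ v : E,
    ∫ x in Ω, f x * fderiv ℝ φ x v = - ∫ x in Ω, (df x v) * φ x) ∧
  ∃ ψ : ℕ → E → ℝ, (∀ n, TestFun Ω (ψ n)) ∧
    Tendsto (fun n => eLpNorm (fun x => f x - ψ n x) (ENNReal.ofReal p) (volume.restrict Ω))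
      atTop (𝓝 0) ∧
    ∀ v : E, Tendsto (fun n =>
        eLpNorm (fun x => df x v - fderiv ℝ (ψ n) x v) (ENNReal.ofReal p) (volume.restrict Ω))
      atTop (𝓝 0)

/-- The half-width `ξ(x) = x(-ln x)^{-r}` of the logarithmic cusp. -/
def logXi (r x : ℝ) : ℝ := x * (-Real.log x) ^ (-r)

/-- The logarithmic cusp domain `Ω_r`: the bounded domain whose boundary consists of the curves
`y = ±x(-ln x)^{-r}` for `0 < x < 1/2` and the circular arc
`y² + (x - 1/2)² = (1/4)(ln 2)^{-2r}` for `1/2 < x < (1/2)(ln 2)^{-r} + 1/2`. -/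
def logCuspDomain (r : ℝ) : Set (ℝ × ℝ) :=
  {q | (0 < q.1 ∧ q.1 ≤ 1 / 2 ∧ |q.2| < logXi r q.1) ∨
       (1 / 2 < q.1 ∧ q.2 ^ 2 + (q.1 - 1 / 2) ^ 2 < 1 / 4 * (Real.log 2) ^ (-(2 * r)))}

open scoped ENNReal NNReal

namespace Statement11Aux

variable {p r x y : ℝ}

/-- measurable version of `logXi` (valid on `(0,1)`). -/
def xiM (r : ℝ) : ℝ → ℝ := fun x => x * Real.exp (Real.log (-Real.log x) * (-r))

lemma xiM_measurable (r : ℝ) : Measurable (xiM r) :=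
  measurable_id.mul (Real.measurable_exp.comp
    ((Real.measurable_log.comp Real.measurable_log.neg).mul_const (-r)))

lemma mem_Ioo01 (hx : x ∈ Ioo (0:ℝ) (1/2)) : x ∈ Ioo (0:ℝ) 1 :=
  ⟨hx.1, lt_trans hx.2 (by norm_num)⟩

lemma neg_log_pos (hx : x ∈ Ioo (0:ℝ) 1) : 0 < -Real.log x := by
  have := Real.log_neg hx.1 hx.2; linarith

lemma xiM_eq (hx : x ∈ Ioo (0:ℝ) 1) : xiM r x = logXi r x := by
  rw [logXi, xiM, Real.rpow_def_of_pos (neg_log_pos hx)]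

lemma logXi_pos (hx : x ∈ Ioo (0:ℝ) 1) : 0 < logXi r x :=
  mul_pos hx.1 (Real.rpow_pos_of_pos (neg_log_pos hx) _)

/-- the cusp part of the domain, described with the measurable `xiM`. -/
def cuspS (r : ℝ) : Set (ℝ × ℝ) :=
  {q | q.1 ∈ Ioo (0:ℝ) (1/2) ∧ q.2 ∈ Ioo (-(xiM r q.1)) (xiM r q.1)}

lemma cuspS_meas : MeasurableSet (cuspS r) := by
  have h1 : Measurable fun q : ℝ × ℝ => xiM r q.1 := (xiM_measurable r).comp measurable_fst
  exact (measurable_fst measurableSet_Ioo).inter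
    ((measurableSet_lt h1.neg measurable_snd).inter (measurableSet_lt measurable_snd h1))

lemma cuspS_subset : cuspS r ⊆ logCuspDomain r := by
  rintro ⟨x, y⟩ ⟨hx, hy⟩
  have hx1 := mem_Ioo01 hx
  left
  refine ⟨hx.1, hx.2.le, ?_⟩
  rw [abs_lt, ← xiM_eq hx1]
  exact ⟨hy.1, hy.2⟩

lemma slice_abs (hx0 : 0 < x) (hx2 : x ≤ 1/2) (h : ((x, y) : ℝ × ℝ) ∈ logCuspDomain r) :
    y ∈ Ioo (-logXi r x) (logXi r x) := by
  rcases h with h | h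
  · have h3 := h.2.2
    rw [abs_lt] at h3
    exact ⟨h3.1, h3.2⟩
  · exact absurd h.1 (not_lt.2 hx2)

lemma slice_lintegral_eq (f : ℝ × ℝ → ℝ≥0∞) (hx : x ∈ Ioo (0:ℝ) (1/2)) :
    ∫⁻ y in Ioo (-logXi r x) (logXi r x), f (x, y) = ∫⁻ y, (cuspS r).indicator f (x, y) := by
  have hxe : xiM r x = logXi r x := xiM_eq (mem_Ioo01 hx)
  rw [← lintegral_indicator measurableSet_Ioo]
  congr 1
  funext y
  by_cases hy : y ∈ Ioo (-logXi r x) (logXi r x)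
  · rw [Set.indicator_of_mem hy, Set.indicator_of_mem]
    exact ⟨hx, by rw [hxe]; exact hy⟩
  · rw [Set.indicator_of_notMem hy, Set.indicator_of_notMem]
    intro hmem
    exact hy (by rw [← hxe]; exact hmem.2)

lemma slice_lintegral_zero (f : ℝ × ℝ → ℝ≥0∞) (hx : x ∉ Ioo (0:ℝ) (1/2)) :
    ∫⁻ y, (cuspS r).indicator f (x, y) = 0 := by
  have h : ∀ y : ℝ, (cuspS r).indicator f (x, y) = 0 := fun y =>
    Set.indicator_of_notMem (fun hmem => hx hmem.1) f
  simp only [h, lintegral_zero]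

lemma cusp_tonelli (f : ℝ × ℝ → ℝ≥0∞) (hf : Measurable f) :
    ∫⁻ x in Ioo (0:ℝ) (1/2), ∫⁻ y in Ioo (-logXi r x) (logXi r x), f (x, y) ≤
      ∫⁻ q in logCuspDomain r, f q := by
  have hind : Measurable ((cuspS r).indicator f) := hf.indicator cuspS_meas
  have h1 : ∫⁻ x in Ioo (0:ℝ) (1/2), ∫⁻ y in Ioo (-logXi r x) (logXi r x), f (x, y)
      = ∫⁻ q in cuspS r, f q := by
    calc ∫⁻ x in Ioo (0:ℝ) (1/2), ∫⁻ y in Ioo (-logXi r x) (logXi r x), f (x, y)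
        = ∫⁻ x, (Ioo (0:ℝ) (1/2)).indicator
            (fun x => ∫⁻ y in Ioo (-logXi r x) (logXi r x), f (x, y)) x :=
          (lintegral_indicator measurableSet_Ioo _).symm
      _ = ∫⁻ x, ∫⁻ y, (cuspS r).indicator f (x, y) := by
          congr 1
          funext x
          by_cases hx : x ∈ Ioo (0:ℝ) (1/2)
          · rw [Set.indicator_of_mem hx, slice_lintegral_eq f hx]
          · rw [Set.indicator_of_notMem hx, slice_lintegral_zero f hx]
      _ = ∫⁻ q, (cuspS r).indicator f q := by
          rw [MeasureTheory.Measure.volume_eq_prod, lintegral_prod _ hind.aemeasurable]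
      _ = ∫⁻ q in cuspS r, f q := lintegral_indicator cuspS_meas f
  rw [h1]
  exact lintegral_mono' (Measure.restrict_mono cuspS_subset le_rfl) le_rfl

lemma holder_slice (hp : 1 < p) (μ : Measure ℝ) (f : ℝ → ℝ≥0∞) (hf : AEMeasurable f μ) :
    ∫⁻ t, f t ∂μ ≤ (∫⁻ t, f t ^ p ∂μ) ^ (1/p) * (μ univ) ^ (1 - 1/p) := by
  have hpq := Real.HolderConjugate.conjExponent hp
  have hq : 1 / Real.conjExponent p = 1 - 1/p := by
    have h2 := hpq.inv_add_inv_eq_one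
    rw [one_div, one_div]
    linarith
  have h := ENNReal.lintegral_mul_le_Lp_mul_Lq μ hpq (g := fun _ => (1:ℝ≥0∞)) hf
    aemeasurable_const
  simp only [Pi.mul_apply, mul_one, ENNReal.one_rpow, lintegral_one, lintegral_const] at h
  calc ∫⁻ t, f t ∂μ ≤ (∫⁻ t, f t ^ p ∂μ) ^ (1/p) * (μ univ) ^ (1 / Real.conjExponent p) := h
    _ = (∫⁻ t, f t ^ p ∂μ) ^ (1/p) * (μ univ) ^ (1 - 1/p) := by rw [hq]


section TestFunLemmas

variable {Ω : Set (ℝ × ℝ)} {φ : ℝ × ℝ → ℝ}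

lemma testfun_deriv_cont (hφ : TestFun Ω φ) :
    Continuous fun q => fderiv ℝ φ q ((0:ℝ), (1:ℝ)) :=
  ((hφ.1.fderiv_right (m := (⊤ : ℕ∞)) (by simp)).continuous).clm_apply continuous_const

lemma testfun_fderiv_zero (hφ : TestFun Ω φ) {q : ℝ × ℝ} (hq : q ∉ Ω) :
    fderiv ℝ φ q = 0 := by
  have h : q ∉ tsupport (fderiv ℝ φ) := fun h => hq (hφ.2.2 (tsupport_fderiv_subset ℝ h))
  exact image_eq_zero_of_notMem_tsupport h

lemma testfun_slice_hcs (hφ : TestFun Ω φ) (x : ℝ) :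
    HasCompactSupport fun t => fderiv ℝ φ (x, t) ((0:ℝ), (1:ℝ)) := by
  obtain ⟨R, hR⟩ := hφ.2.1.isBounded.subset_closedBall 0
  apply HasCompactSupport.intro (isCompact_Icc (a := -R) (b := R))
  intro t ht
  have h1 : (x, t) ∉ tsupport φ := by
    intro hmem
    have h3 : ‖t‖ ≤ R := le_trans (norm_snd_le ((x, t) : ℝ × ℝ))
      (mem_closedBall_zero_iff.1 (hR hmem))
    rw [Real.norm_eq_abs] at h3
    exact ht ⟨(abs_le.1 h3).1, (abs_le.1 h3).2⟩
  have h4 : fderiv ℝ φ (x, t) = 0 :=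
    image_eq_zero_of_notMem_tsupport fun h => h1 (tsupport_fderiv_subset ℝ h)
  rw [h4]
  rfl

lemma testfun_slice_cont (hφ : TestFun Ω φ) (x : ℝ) :
    Continuous fun t => fderiv ℝ φ (x, t) ((0:ℝ), (1:ℝ)) :=
  (testfun_deriv_cont hφ).comp (continuous_const.prodMk continuous_id)

lemma testfun_slice_integrable (hφ : TestFun Ω φ) (x : ℝ) :
    Integrable (fun t => fderiv ℝ φ (x, t) ((0:ℝ), (1:ℝ))) volume :=
  (testfun_slice_cont hφ x).integrable_of_hasCompactSupport (testfun_slice_hcs hφ x)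

lemma testfun_sup_bound (hφ : TestFun Ω φ) (x y : ℝ) :
    |φ (x, y)| ≤ ∫ t, ‖fderiv ℝ φ (x, t) ((0:ℝ), (1:ℝ))‖ := by
  obtain ⟨R, hR⟩ := hφ.2.1.isBounded.subset_closedBall 0
  set R' : ℝ := max R 0 with hR'def
  have hR' : tsupport φ ⊆ Metric.closedBall 0 R' :=
    hR.trans (Metric.closedBall_subset_closedBall (le_max_left _ _))
  set a : ℝ := -(R' + |y| + 1) with ha
  have hφa : φ (x, a) = 0 := by
    apply image_eq_zero_of_notMem_tsupport
    intro hmem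
    have h3 : ‖a‖ ≤ R' := le_trans (norm_snd_le ((x, a) : ℝ × ℝ))
      (mem_closedBall_zero_iff.1 (hR' hmem))
    rw [Real.norm_eq_abs] at h3
    have hRnn : 0 ≤ R' := le_max_right _ _
    have : |a| = R' + |y| + 1 := by
      rw [ha, abs_neg, abs_of_nonneg (by positivity)]
    rw [this] at h3
    have := abs_nonneg y
    linarith
  have hder : ∀ t ∈ uIcc a y,
      HasDerivAt (fun t => φ (x, t)) (fderiv ℝ φ (x, t) ((0:ℝ), (1:ℝ))) t := by
    intro t _
    have h1 : HasFDerivAt φ (fderiv ℝ φ (x, t)) (x, t) :=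
      ((hφ.1.differentiable (by simp)) (x, t)).hasFDerivAt
    have h2 : HasDerivAt (fun t => ((x, t) : ℝ × ℝ)) (((0:ℝ), (1:ℝ)) : ℝ × ℝ) t :=
      (hasDerivAt_const t x).prodMk (hasDerivAt_id t)
    exact h1.comp_hasDerivAt t h2
  have hFTC : ∫ t in a..y, fderiv ℝ φ (x, t) ((0:ℝ), (1:ℝ)) = φ (x, y) - φ (x, a) :=
    intervalIntegral.integral_eq_sub_of_hasDerivAt hder
      ((testfun_slice_cont hφ x).intervalIntegrable a y)
  have hint : Integrable (fun t => ‖fderiv ℝ φ (x, t) ((0:ℝ), (1:ℝ))‖) volume :=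
    (testfun_slice_integrable hφ x).norm
  calc |φ (x, y)| = ‖∫ t in a..y, fderiv ℝ φ (x, t) ((0:ℝ), (1:ℝ))‖ := by
        rw [hFTC, hφa, sub_zero, Real.norm_eq_abs]
    _ ≤ ∫ t in Set.uIoc a y, ‖fderiv ℝ φ (x, t) ((0:ℝ), (1:ℝ))‖ :=
        intervalIntegral.norm_integral_le_integral_norm_uIoc
    _ ≤ ∫ t, ‖fderiv ℝ φ (x, t) ((0:ℝ), (1:ℝ))‖ :=
        setIntegral_le_integral hint (Filter.Eventually.of_forall fun t => norm_nonneg _)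

end TestFunLemmas

section Weight

variable {p r x : ℝ}

lemma weight_eq (hx : x ∈ Ioo (0:ℝ) (1/2)) :
    x ^ ((2*p-1)/p) * (-Real.log x) ^ (-(r*(2*p-1)/p)) = logXi r x ^ ((2*p-1)/p) := by
  have h1 : 0 < -Real.log x := neg_log_pos (mem_Ioo01 hx)
  have he : -(r*(2*p-1)/p) = -r * ((2*p-1)/p) := by ring
  rw [logXi, Real.mul_rpow hx.1.le (Real.rpow_nonneg h1.le _), ← Real.rpow_mul h1.le, he]

lemma weight_pos (hx : x ∈ Ioo (0:ℝ) (1/2)) :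
    0 < x ^ ((2*p-1)/p) * (-Real.log x) ^ (-(r*(2*p-1)/p)) := by
  have h1 : 0 < -Real.log x := neg_log_pos (mem_Ioo01 hx)
  exact mul_pos (Real.rpow_pos_of_pos hx.1 _) (Real.rpow_pos_of_pos h1 _)

lemma lint_eq_eLpNorm {α : Type*} [MeasurableSpace α] (hp : 1 < p) (f : α → ℝ) (μ : Measure α) :
    ∫⁻ a, (‖f a‖₊ : ℝ≥0∞) ^ p ∂μ = eLpNorm f (ENNReal.ofReal p) μ ^ p := by
  have hp0 : 0 < p := lt_trans one_pos hp
  rw [eLpNorm_eq_lintegral_rpow_enorm_toReal (ENNReal.ofReal_pos.2 hp0).ne' ENNReal.ofReal_ne_top]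
  simp only [enorm_eq_nnnorm]
  rw [ENNReal.toReal_ofReal hp0.le, ← ENNReal.rpow_mul, one_div, inv_mul_cancel₀ hp0.ne',
    ENNReal.rpow_one]

end Weight

section KeyEstimate

variable {p r x : ℝ} {φ : ℝ × ℝ → ℝ}

lemma testfun_pointwise (hp : 1 < p) (hφ : TestFun (logCuspDomain r) φ)
    (hx : x ∈ Ioo (0:ℝ) (1/2)) :
    (‖(∫ y in Ioo (-logXi r x) (logXi r x), φ (x, y)) /
        (x ^ ((2*p-1)/p) * (-Real.log x) ^ (-(r*(2*p-1)/p)))‖₊ : ℝ≥0∞) ^ p ≤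
      (2:ℝ≥0∞) ^ (2*p-1) *
        ∫⁻ t in Ioo (-logXi r x) (logXi r x), (‖fderiv ℝ φ (x, t) ((0:ℝ),(1:ℝ))‖₊ : ℝ≥0∞) ^ p := by
  have hp0 : 0 < p := lt_trans one_pos hp
  set ξ := logXi r x with hξdef
  have hξ : 0 < ξ := logXi_pos (mem_Ioo01 hx)
  set w := x ^ ((2*p-1)/p) * (-Real.log x) ^ (-(r*(2*p-1)/p)) with hwdef
  have hw : w = ξ ^ ((2*p-1)/p) := weight_eq hx
  have hwpos : 0 < w := weight_pos hx
  set A := ∫ y in Ioo (-ξ) ξ, φ (x, y) with hAdef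
  set G := ∫ t, ‖fderiv ℝ φ (x, t) ((0:ℝ),(1:ℝ))‖ with hGdef
  set K := ∫⁻ t in Ioo (-ξ) ξ, (‖fderiv ℝ φ (x, t) ((0:ℝ),(1:ℝ))‖₊ : ℝ≥0∞) ^ p with hKdef
  set a := ENNReal.ofReal ξ with hadef
  have ha0 : a ≠ 0 := (ENNReal.ofReal_pos.2 hξ).ne'
  have hat : a ≠ ⊤ := ENNReal.ofReal_ne_top
  have h2a0 : (2:ℝ≥0∞) * a ≠ 0 := by simp [ha0]
  have h2at : (2:ℝ≥0∞) * a ≠ ⊤ := ENNReal.mul_ne_top (by norm_num) hat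
  have h2ξ : volume (Ioo (-ξ) ξ) = 2 * a := by
    rw [Real.volume_Ioo, hadef, ← ENNReal.ofReal_ofNat, ← ENNReal.ofReal_mul (by norm_num)]
    congr 1
    ring
  have hGnn : 0 ≤ G := integral_nonneg fun t => norm_nonneg _
  -- step 1 : |A| ≤ G * (2ξ)
  have hA1 : ‖A‖ ≤ G * (2 * ξ) := by
    have hb := norm_setIntegral_le_of_norm_le_const (μ := volume) (s := Ioo (-ξ) ξ)
      (f := fun y => φ (x, y)) (C := G) measure_Ioo_lt_top
      (fun y _ => by
        rw [Real.norm_eq_abs]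
        exact testfun_sup_bound hφ x y)
    calc ‖A‖ ≤ G * (volume (Ioo (-ξ) ξ)).toReal := hb
      _ = G * (2 * ξ) := by
          rw [Real.volume_Ioo, ENNReal.toReal_ofReal (by linarith)]
          ring_nf
  -- step 2 : ofReal G = full-line lintegral of the derivative = lintegral over the slice
  have hG2 : ENNReal.ofReal G = ∫⁻ t, (‖fderiv ℝ φ (x, t) ((0:ℝ),(1:ℝ))‖₊ : ℝ≥0∞) :=
    ofReal_integral_norm_eq_lintegral_enorm (testfun_slice_integrable hφ x)
  have hG3 : ∫⁻ t, (‖fderiv ℝ φ (x, t) ((0:ℝ),(1:ℝ))‖₊ : ℝ≥0∞)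
      = ∫⁻ t in Ioo (-ξ) ξ, (‖fderiv ℝ φ (x, t) ((0:ℝ),(1:ℝ))‖₊ : ℝ≥0∞) := by
    rw [← lintegral_indicator measurableSet_Ioo]
    congr 1
    funext t
    by_cases ht : t ∈ Ioo (-ξ) ξ
    · rw [Set.indicator_of_mem ht]
    · rw [Set.indicator_of_notMem ht]
      have hq : ((x, t) : ℝ × ℝ) ∉ logCuspDomain r := fun hmem =>
        ht (slice_abs hx.1 hx.2.le hmem)
      rw [testfun_fderiv_zero hφ hq]
      simp
  -- step 3 : Hölder on the slice
  have hmeas : Measurable fun t => (‖fderiv ℝ φ (x, t) ((0:ℝ),(1:ℝ))‖₊ : ℝ≥0∞) :=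
    (testfun_slice_cont hφ x).measurable.nnnorm.coe_nnreal_ennreal
  have hHold : (∫⁻ t in Ioo (-ξ) ξ, (‖fderiv ℝ φ (x, t) ((0:ℝ),(1:ℝ))‖₊ : ℝ≥0∞))
      ≤ K ^ (1/p) * (2*a) ^ (1 - 1/p) := by
    have h := holder_slice hp (volume.restrict (Ioo (-ξ) ξ))
      (fun t => (‖fderiv ℝ φ (x, t) ((0:ℝ),(1:ℝ))‖₊ : ℝ≥0∞)) hmeas.aemeasurable
    rwa [Measure.restrict_apply_univ, h2ξ] at h
  -- assemble
  have hnum : (‖A‖₊ : ℝ≥0∞) ≤ 2 * a * (K ^ (1/p) * (2*a) ^ (1 - 1/p)) := by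
    rw [← enorm_eq_nnnorm, ← ofReal_norm]
    calc ENNReal.ofReal ‖A‖ ≤ ENNReal.ofReal (G * (2 * ξ)) := ENNReal.ofReal_le_ofReal hA1
      _ = ENNReal.ofReal G * (2 * a) := by
          rw [hadef, ← ENNReal.ofReal_ofNat 2, ← ENNReal.ofReal_mul (by norm_num : (0:ℝ) ≤ 2),
            ← ENNReal.ofReal_mul hGnn]
      _ ≤ K ^ (1/p) * (2*a) ^ (1 - 1/p) * (2 * a) := by
          apply mul_le_mul_left
          rw [hG2, hG3]
          exact hHold
      _ = 2 * a * (K ^ (1/p) * (2*a) ^ (1 - 1/p)) := by ring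
  have hden : (‖w‖₊ : ℝ≥0∞) = a ^ ((2*p-1)/p) := by
    rw [← enorm_eq_nnnorm, ← ofReal_norm, Real.norm_eq_abs, abs_of_pos hwpos, hw,
      ENNReal.ofReal_rpow_of_pos hξ]
  have hKt : K ≠ ⊤ → True := fun _ => trivial
  -- the quotient
  have hquot : (‖A / w‖₊ : ℝ≥0∞) = (‖A‖₊ : ℝ≥0∞) / (‖w‖₊ : ℝ≥0∞) := by
    rw [← enorm_eq_nnnorm, ← enorm_eq_nnnorm, ← enorm_eq_nnnorm, ← ofReal_norm, ← ofReal_norm, ← ofReal_norm,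
      norm_div, ENNReal.ofReal_div_of_pos (by rwa [Real.norm_eq_abs, abs_of_pos hwpos])]
  rw [hquot, ENNReal.div_rpow_of_nonneg _ _ hp0.le, hden]
  -- bound the numerator power
  have hBp : ((2 * a * (K ^ (1/p) * (2*a) ^ (1 - 1/p))) : ℝ≥0∞) ^ p
      = (2*a) ^ (2*p-1) * K := by
    have he0 : (1/p) * p = 1 := by field_simp
    have he1 : (1 - 1/p) * p = p - 1 := by field_simp
    have he3 : p + (p - 1) = 2*p-1 := by ring
    calc (2 * a * (K ^ (1/p) * (2*a) ^ (1 - 1/p))) ^ p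
        = (2*a) ^ p * ((K ^ (1/p)) ^ p * (((2*a) ^ (1 - 1/p)) ^ p)) := by
          rw [ENNReal.mul_rpow_of_nonneg (2*a) _ hp0.le,
            ENNReal.mul_rpow_of_nonneg (K ^ (1/p)) ((2*a) ^ (1 - 1/p)) hp0.le]
      _ = (2*a) ^ p * (K * (2*a) ^ (p-1)) := by
          rw [← ENNReal.rpow_mul K (1/p) p, ← ENNReal.rpow_mul (2*a) (1 - 1/p) p, he0, he1,
            ENNReal.rpow_one]
      _ = (2*a) ^ (p + (p-1)) * K := by
          rw [ENNReal.rpow_add _ _ h2a0 h2at]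
          ring
      _ = (2*a) ^ (2*p-1) * K := by rw [he3]
  have hmono : ((‖A‖₊ : ℝ≥0∞)) ^ p ≤ (2*a) ^ (2*p-1) * K := by
    rw [← hBp]
    exact ENNReal.rpow_le_rpow hnum hp0.le
  have hden2 : ((a : ℝ≥0∞) ^ ((2*p-1)/p)) ^ p = a ^ (2*p-1) := by
    rw [← ENNReal.rpow_mul]
    congr 1
    field_simp
  rw [hden2]
  have hfinal : ((2:ℝ≥0∞)*a) ^ (2*p-1) * K / a ^ (2*p-1) = (2:ℝ≥0∞) ^ (2*p-1) * K := by
    have hc0 : (0:ℝ) ≤ 2*p-1 := by linarith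
    rw [ENNReal.mul_rpow_of_nonneg _ _ hc0]
    have hane0 : (a : ℝ≥0∞) ^ (2*p-1) ≠ 0 :=
      (ENNReal.rpow_pos (ENNReal.ofReal_pos.2 hξ) hat).ne'
    have hanet : (a : ℝ≥0∞) ^ (2*p-1) ≠ ⊤ := ENNReal.rpow_ne_top_of_nonneg hc0 hat
    have hre : (2:ℝ≥0∞)^(2*p-1) * a^(2*p-1) * K = a^(2*p-1) * ((2:ℝ≥0∞)^(2*p-1) * K) := by
      ring
    rw [hre, mul_div_assoc, ENNReal.mul_div_cancel hane0 hanet]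
  calc (‖A‖₊ : ℝ≥0∞) ^ p / a ^ (2*p-1) ≤ ((2:ℝ≥0∞)*a) ^ (2*p-1) * K / a ^ (2*p-1) :=
        ENNReal.div_le_div_right hmono _
    _ = (2:ℝ≥0∞) ^ (2*p-1) * K := hfinal

end KeyEstimate

section ELp

variable {p r : ℝ} {φ : ℝ × ℝ → ℝ}

lemma rpow_inv_rpow_self {X : ℝ≥0∞} {p : ℝ} (hp0 : p ≠ 0) : (X ^ p) ^ (1/p) = X := by
  rw [← ENNReal.rpow_mul, mul_one_div, div_self hp0, ENNReal.rpow_one]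

lemma testfun_key (hp : 1 < p) (hφ : TestFun (logCuspDomain r) φ) :
    eLpNorm (fun x => (∫ y in Ioo (-logXi r x) (logXi r x), φ (x, y)) /
        (x ^ ((2*p-1)/p) * (-Real.log x) ^ (-(r*(2*p-1)/p)))) (ENNReal.ofReal p)
        (volume.restrict (Ioo (0:ℝ) (1/2))) ≤
      4 * eLpNorm (fun q => fderiv ℝ φ q ((0:ℝ),(1:ℝ))) (ENNReal.ofReal p)
        (volume.restrict (logCuspDomain r)) := by
  have hp0 : 0 < p := lt_trans one_pos hp
  have hc0 : (0:ℝ) ≤ 2*p-1 := by linarith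
  have hmeasD : Measurable fun q : ℝ × ℝ => (‖fderiv ℝ φ q ((0:ℝ),(1:ℝ))‖₊ : ℝ≥0∞) ^ p :=
    ENNReal.continuous_rpow_const.measurable.comp
      (testfun_deriv_cont hφ).measurable.nnnorm.coe_nnreal_ennreal
  set F := fun x : ℝ => (∫ y in Ioo (-logXi r x) (logXi r x), φ (x, y)) /
      (x ^ ((2*p-1)/p) * (-Real.log x) ^ (-(r*(2*p-1)/p))) with hFdef
  set D := fun q : ℝ × ℝ => fderiv ℝ φ q ((0:ℝ),(1:ℝ)) with hDdef
  have h1 : ∫⁻ x in Ioo (0:ℝ) (1/2), (‖F x‖₊ : ℝ≥0∞) ^ p ≤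
      (2:ℝ≥0∞) ^ (2*p-1) * ∫⁻ q in logCuspDomain r, (‖D q‖₊ : ℝ≥0∞) ^ p := by
    calc ∫⁻ x in Ioo (0:ℝ) (1/2), (‖F x‖₊ : ℝ≥0∞) ^ p
        ≤ ∫⁻ x in Ioo (0:ℝ) (1/2), (2:ℝ≥0∞) ^ (2*p-1) *
            ∫⁻ t in Ioo (-logXi r x) (logXi r x), (‖D (x, t)‖₊ : ℝ≥0∞) ^ p :=
          lintegral_mono_ae ((ae_restrict_mem measurableSet_Ioo).mono fun x hx =>
            testfun_pointwise hp hφ hx)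
      _ = (2:ℝ≥0∞) ^ (2*p-1) * ∫⁻ x in Ioo (0:ℝ) (1/2),
            ∫⁻ t in Ioo (-logXi r x) (logXi r x), (‖D (x, t)‖₊ : ℝ≥0∞) ^ p :=
          lintegral_const_mul' _ _ (ENNReal.rpow_ne_top_of_nonneg hc0 (by norm_num))
      _ ≤ (2:ℝ≥0∞) ^ (2*p-1) * ∫⁻ q in logCuspDomain r, (‖D q‖₊ : ℝ≥0∞) ^ p :=
          mul_le_mul_right (cusp_tonelli _ hmeasD) _
  have h2 := lint_eq_eLpNorm hp F (volume.restrict (Ioo (0:ℝ) (1/2)))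
  have h3 := lint_eq_eLpNorm hp D (volume.restrict (logCuspDomain r))
  rw [h2, h3] at h1
  have h4 : eLpNorm F (ENNReal.ofReal p) (volume.restrict (Ioo (0:ℝ) (1/2)))
      = ((eLpNorm F (ENNReal.ofReal p) (volume.restrict (Ioo (0:ℝ) (1/2)))) ^ p) ^ (1/p) :=
    (rpow_inv_rpow_self hp0.ne').symm
  rw [h4]
  calc ((eLpNorm F (ENNReal.ofReal p) (volume.restrict (Ioo (0:ℝ) (1/2)))) ^ p) ^ (1/p)
      ≤ ((2:ℝ≥0∞) ^ (2*p-1) *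
          (eLpNorm D (ENNReal.ofReal p) (volume.restrict (logCuspDomain r))) ^ p) ^ (1/p) :=
        ENNReal.rpow_le_rpow h1 (by positivity)
    _ = ((2:ℝ≥0∞) ^ (2*p-1)) ^ (1/p) *
          eLpNorm D (ENNReal.ofReal p) (volume.restrict (logCuspDomain r)) := by
        rw [ENNReal.mul_rpow_of_nonneg _ _ (by positivity : (0:ℝ) ≤ 1/p),
          rpow_inv_rpow_self hp0.ne']
    _ ≤ 4 * eLpNorm D (ENNReal.ofReal p) (volume.restrict (logCuspDomain r)) := by
        apply mul_le_mul_left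
        have he : ((2:ℝ≥0∞) ^ (2*p-1)) ^ (1/p) = (2:ℝ≥0∞) ^ ((2*p-1) * (1/p)) :=
          (ENNReal.rpow_mul 2 (2*p-1) (1/p)).symm
        rw [he]
        have hle : (2*p-1) * (1/p) ≤ 2 := by
          have : (2*p-1) * (1/p) = 2 - 1/p := by field_simp
          rw [this]
          have : 0 < 1/p := by positivity
          linarith
        calc (2:ℝ≥0∞) ^ ((2*p-1) * (1/p)) ≤ (2:ℝ≥0∞) ^ (2:ℝ) :=
              ENNReal.rpow_le_rpow_of_exponent_le one_le_two hle
          _ = 4 := by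
              rw [show (2:ℝ) = ((2:ℕ):ℝ) by norm_num, ENNReal.rpow_natCast]
              norm_num

lemma testfun_A_aesm (hφc : Continuous φ) :
    AEStronglyMeasurable (fun x => (∫ y in Ioo (-logXi r x) (logXi r x), φ (x, y)) /
      (x ^ ((2*p-1)/p) * (-Real.log x) ^ (-(r*(2*p-1)/p))))
      (volume.restrict (Ioo (0:ℝ) (1/2))) := by
  have hF : StronglyMeasurable ((cuspS r).indicator φ) :=
    hφc.stronglyMeasurable.indicator cuspS_meas
  have h1 : StronglyMeasurable fun x => ∫ y, (cuspS r).indicator φ (x, y) :=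
    hF.integral_prod_right'
  have h2 : Measurable fun x : ℝ => Real.exp (Real.log x * ((2*p-1)/p)) *
      Real.exp (Real.log (-Real.log x) * (-(r*(2*p-1)/p))) :=
    (Real.measurable_exp.comp (Real.measurable_log.mul_const _)).mul
      (Real.measurable_exp.comp
        ((Real.measurable_log.comp Real.measurable_log.neg).mul_const _))
  refine AEStronglyMeasurable.congr (h1.measurable.div h2).aestronglyMeasurable ?_
  filter_upwards [ae_restrict_mem measurableSet_Ioo] with x hx
  have hx1 := mem_Ioo01 hx
  have hxe : xiM r x = logXi r x := xiM_eq hx1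
  have hlog : 0 < -Real.log x := neg_log_pos hx1
  rw [Pi.div_apply]
  congr 1
  · have hind : ∀ y : ℝ, (cuspS r).indicator φ (x, y) =
        (Ioo (-logXi r x) (logXi r x)).indicator (fun y => φ (x, y)) y := by
      intro y
      by_cases hy : y ∈ Ioo (-logXi r x) (logXi r x)
      · rw [Set.indicator_of_mem hy,
          Set.indicator_of_mem
            (show ((x, y) : ℝ × ℝ) ∈ cuspS r from ⟨hx, by rw [hxe]; exact hy⟩) φ]
      · rw [Set.indicator_of_notMem hy,
          Set.indicator_of_notMem
            (show ((x, y) : ℝ × ℝ) ∉ cuspS r from fun hm => hy (by rw [← hxe]; exact hm.2)) φ]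
    simp only [hind]
    rw [integral_indicator measurableSet_Ioo]
  · rw [Real.rpow_def_of_pos hx.1, Real.rpow_def_of_pos hlog]

end ELp

end Statement11Aux

open Statement11Aux

/-- For `u = (u₁,u₂) ∈ (W^{1,p}_0(Ω_r))²` and
`A(x) = ∫_{-ξ(x)}^{ξ(x)} u₁(x,y) dy`, the function
`x ↦ A(x)/(x^{(2p-1)/p}(-ln x)^{-r(2p-1)/p})` belongs to `L^p((0,1/2))`. -/
theorem statement11 (p r : ℝ) (hp1 : 1 < p) (hr : 0 < r)
    (u₁ u₂ : ℝ × ℝ → ℝ) (du₁ du₂ : ℝ × ℝ → (ℝ × ℝ) →L[ℝ] ℝ)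
    (hu₁ : MemW1p0 p (logCuspDomain r) u₁ du₁) (hu₂ : MemW1p0 p (logCuspDomain r) u₂ du₂) :
    MemLp (fun x : ℝ =>
        (∫ y in Ioo (-logXi r x) (logXi r x), u₁ (x, y)) /
          (x ^ ((2 * p - 1) / p) * (-Real.log x) ^ (-(r * (2 * p - 1) / p))))
      (ENNReal.ofReal p) (volume.restrict (Ioo (0 : ℝ) (1 / 2))) := by
  classical
  obtain ⟨huL, hduL, _hweak, ψ, hψt, hψconv, hdψconv⟩ := hu₁
  have hp0 : 0 < p := lt_trans one_pos hp1
  have hexp : (0:ℝ) ≤ 1 - 1/p := by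
    rw [sub_nonneg, div_le_one hp0]
    exact hp1.le
  -- choose a good subsequence of test functions
  have hchoice : ∀ k : ℕ, ∃ m : ℕ,
      eLpNorm (fun q => u₁ q - ψ m q) (ENNReal.ofReal p)
        (volume.restrict (logCuspDomain r)) ≤ ((2:ℝ≥0∞)⁻¹) ^ k ∧
      eLpNorm (fun q => du₁ q ((0:ℝ),(1:ℝ)) - fderiv ℝ (ψ m) q ((0:ℝ),(1:ℝ)))
        (ENNReal.ofReal p) (volume.restrict (logCuspDomain r)) ≤ 1 := by
    intro k
    have hpos : (0:ℝ≥0∞) < ((2:ℝ≥0∞)⁻¹) ^ k :=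
      ENNReal.pow_pos (ENNReal.inv_pos.mpr ENNReal.ofNat_ne_top) k
    have h1 := hψconv.eventually_lt_const hpos
    have h2 := (hdψconv ((0:ℝ),(1:ℝ))).eventually_lt_const (zero_lt_one (α := ℝ≥0∞))
    exact ((h1.and h2).mono fun m hm => ⟨hm.1.le, hm.2.le⟩).exists
  choose nk hn1 hn2 using hchoice
  set φk : ℕ → ℝ × ℝ → ℝ := fun k => ψ (nk k) with hφkdef
  have hφt : ∀ k, TestFun (logCuspDomain r) (φk k) := fun k => hψt (nk k)
  -- measurable representative of u₁
  set g := huL.1.mk u₁ with hgdef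
  have hg : StronglyMeasurable g := huL.1.stronglyMeasurable_mk
  have hug : u₁ =ᵐ[volume.restrict (logCuspDomain r)] g := huL.1.ae_eq_mk
  have hDaesm : AEStronglyMeasurable (fun q : ℝ × ℝ => du₁ q ((0:ℝ),(1:ℝ)))
      (volume.restrict (logCuspDomain r)) := (hduL ((0:ℝ),(1:ℝ))).1
  -- difference slice integrals
  set mKf : ℕ → ℝ × ℝ → ℝ≥0∞ := fun k q => (‖g q - φk k q‖₊ : ℝ≥0∞) ^ p with hmKfdef
  have hmKf_meas : ∀ k, Measurable (mKf k) := fun k =>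
    ENNReal.continuous_rpow_const.measurable.comp
      ((hg.measurable.sub (hφt k).1.continuous.measurable).nnnorm.coe_nnreal_ennreal)
  set mK : ℕ → ℝ → ℝ≥0∞ := fun k x => ∫⁻ y, (cuspS r).indicator (mKf k) (x, y) with hmKdef
  have hmK_meas : ∀ k, Measurable (mK k) := fun k =>
    Measurable.lintegral_prod_right' ((hmKf_meas k).indicator cuspS_meas)
  have hmK_int : ∀ k, ∫⁻ x in Ioo (0:ℝ) (1/2), mK k x ≤ ((2:ℝ≥0∞)⁻¹) ^ k := by
    intro k
    have hslice : ∫⁻ x in Ioo (0:ℝ) (1/2), mK k x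
        = ∫⁻ x in Ioo (0:ℝ) (1/2), ∫⁻ y in Ioo (-logXi r x) (logXi r x), mKf k (x, y) :=
      setLIntegral_congr_fun measurableSet_Ioo (
        fun x hx => (slice_lintegral_eq (mKf k) hx).symm)
    rw [hslice]
    calc ∫⁻ x in Ioo (0:ℝ) (1/2), ∫⁻ y in Ioo (-logXi r x) (logXi r x), mKf k (x, y)
        ≤ ∫⁻ q in logCuspDomain r, mKf k q := cusp_tonelli (mKf k) (hmKf_meas k)
      _ = ∫⁻ q in logCuspDomain r, (‖u₁ q - φk k q‖₊ : ℝ≥0∞) ^ p := by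
          apply lintegral_congr_ae
          filter_upwards [hug] with q hq
          rw [hmKfdef]
          simp only
          rw [← hq]
      _ = eLpNorm (fun q => u₁ q - φk k q) (ENNReal.ofReal p)
            (volume.restrict (logCuspDomain r)) ^ p := lint_eq_eLpNorm hp1 _ _
      _ ≤ (((2:ℝ≥0∞)⁻¹) ^ k) ^ p := ENNReal.rpow_le_rpow (hn1 k) hp0.le
      _ ≤ ((2:ℝ≥0∞)⁻¹) ^ k := by
          have hb : ((2:ℝ≥0∞)⁻¹) ^ k ≤ 1 := pow_le_one' (ENNReal.inv_le_one.2 one_le_two) k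
          calc (((2:ℝ≥0∞)⁻¹) ^ k) ^ p ≤ (((2:ℝ≥0∞)⁻¹) ^ k) ^ (1:ℝ) :=
              ENNReal.rpow_le_rpow_of_exponent_ge hb hp1.le
            _ = ((2:ℝ≥0∞)⁻¹) ^ k := ENNReal.rpow_one _
  have htsumfin : ∫⁻ x in Ioo (0:ℝ) (1/2), ∑' k, mK k x ≠ ⊤ := by
    rw [lintegral_tsum fun k => (hmK_meas k).aemeasurable]
    have hle : ∑' k, ∫⁻ x in Ioo (0:ℝ) (1/2), mK k x ≤ ∑' k : ℕ, ((2:ℝ≥0∞)⁻¹) ^ k :=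
      ENNReal.tsum_le_tsum hmK_int
    rw [ENNReal.tsum_geometric] at hle
    refine ne_top_of_le_ne_top ?_ hle
    simp
  have hae1 : ∀ᵐ x ∂(volume.restrict (Ioo (0:ℝ) (1/2))), ∑' k, mK k x < ⊤ :=
    ae_lt_top (Measurable.ennreal_tsum hmK_meas) htsumfin
  -- p-integral of g on slices
  set Mf : ℝ × ℝ → ℝ≥0∞ := fun q => (‖g q‖₊ : ℝ≥0∞) ^ p with hMfdef
  have hMf_meas : Measurable Mf := ENNReal.continuous_rpow_const.measurable.comp
    hg.measurable.nnnorm.coe_nnreal_ennreal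
  set M : ℝ → ℝ≥0∞ := fun x => ∫⁻ y, (cuspS r).indicator Mf (x, y) with hMdef
  have hM_meas : Measurable M :=
    Measurable.lintegral_prod_right' (hMf_meas.indicator cuspS_meas)
  have hM_int : ∫⁻ x in Ioo (0:ℝ) (1/2), M x ≠ ⊤ := by
    have hslice : ∫⁻ x in Ioo (0:ℝ) (1/2), M x
        = ∫⁻ x in Ioo (0:ℝ) (1/2), ∫⁻ y in Ioo (-logXi r x) (logXi r x), Mf (x, y) :=
      setLIntegral_congr_fun measurableSet_Ioo (
        fun x hx => (slice_lintegral_eq Mf hx).symm)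
    rw [hslice]
    have h1 : ∫⁻ x in Ioo (0:ℝ) (1/2), ∫⁻ y in Ioo (-logXi r x) (logXi r x), Mf (x, y)
        ≤ ∫⁻ q in logCuspDomain r, Mf q := cusp_tonelli Mf hMf_meas
    have h2 : ∫⁻ q in logCuspDomain r, Mf q
        = ∫⁻ q in logCuspDomain r, (‖u₁ q‖₊ : ℝ≥0∞) ^ p := by
        apply lintegral_congr_ae
        filter_upwards [hug] with q hq
        rw [hMfdef]
        simp only
        rw [← hq]
    have h3 : ∫⁻ q in logCuspDomain r, (‖u₁ q‖₊ : ℝ≥0∞) ^ p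
        = eLpNorm u₁ (ENNReal.ofReal p) (volume.restrict (logCuspDomain r)) ^ p :=
      lint_eq_eLpNorm hp1 _ _
    exact ne_top_of_le_ne_top
      (ENNReal.rpow_ne_top_of_nonneg hp0.le huL.2.ne) (h1.trans_eq (h2.trans h3))
  have hae2 : ∀ᵐ x ∂(volume.restrict (Ioo (0:ℝ) (1/2))), M x < ⊤ := ae_lt_top hM_meas hM_int
  -- a.e. equality of u₁ and g on slices
  have hnull : volume ({q : ℝ × ℝ | u₁ q ≠ g q} ∩ cuspS r) = 0 := by
    have h1 : u₁ =ᵐ[volume.restrict (cuspS r)] g :=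
      hug.filter_mono (ae_mono (Measure.restrict_mono cuspS_subset le_rfl))
    rw [EventuallyEq, ae_iff, Measure.restrict_apply' cuspS_meas] at h1
    exact h1
  obtain ⟨B, hABsub, hBmeas, hB0⟩ := exists_measurable_superset_of_null hnull
  have hBres : ∀ᵐ x ∂(volume.restrict (Ioo (0:ℝ) (1/2))), volume (Prod.mk x ⁻¹' B) = 0 := by
    have h1 : ((volume : Measure ℝ).prod (volume : Measure ℝ)) B = 0 := by
      rw [← MeasureTheory.Measure.volume_eq_prod]
      exact hB0
    have h2 := (Measure.measure_prod_null hBmeas).1 h1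
    refine Filter.Eventually.filter_mono (ae_mono Measure.restrict_le_self) ?_
    filter_upwards [h2] with x hx
    simpa using hx
  -- the approximating functions and the limit
  set Fk : ℕ → ℝ → ℝ := fun k x => (∫ y in Ioo (-logXi r x) (logXi r x), φk k (x, y)) /
      (x ^ ((2 * p - 1) / p) * (-Real.log x) ^ (-(r * (2 * p - 1) / p))) with hFkdef
  have htend : ∀ᵐ x ∂(volume.restrict (Ioo (0:ℝ) (1/2))),
      Tendsto (fun k => Fk k x) atTop
        (𝓝 ((∫ y in Ioo (-logXi r x) (logXi r x), u₁ (x, y)) /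
          (x ^ ((2 * p - 1) / p) * (-Real.log x) ^ (-(r * (2 * p - 1) / p))))) := by
    filter_upwards [ae_restrict_mem measurableSet_Ioo, hae1, hae2, hBres]
      with x hx hx1 hx2 hx3
    have hxe : xiM r x = logXi r x := xiM_eq (mem_Ioo01 hx)
    have hmem : ∀ y ∈ Ioo (-logXi r x) (logXi r x), ((x, y) : ℝ × ℝ) ∈ cuspS r := by
      intro y hy
      exact ⟨hx, by rw [hxe]; exact hy⟩
    have hm0 : Tendsto (fun k => mK k x) atTop (𝓝 0) :=
      ENNReal.tendsto_atTop_zero_of_tsum_ne_top hx1.ne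
    have hcne : volume (Ioo (-logXi r x) (logXi r x)) ≠ ⊤ := measure_Ioo_lt_top.ne
    have hMx : ∫⁻ y in Ioo (-logXi r x) (logXi r x), Mf (x, y) < ⊤ := by
      rw [slice_lintegral_eq Mf hx]
      exact hx2
    have hmKx : ∀ k, ∫⁻ y in Ioo (-logXi r x) (logXi r x), mKf k (x, y) = mK k x :=
      fun k => slice_lintegral_eq (mKf k) hx
    -- a.e. equality on the slice
    have hslice_ae : (fun y => u₁ (x, y)) =ᵐ[volume.restrict (Ioo (-logXi r x) (logXi r x))]
        fun y => g (x, y) := by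
      rw [EventuallyEq, ae_iff, Measure.restrict_apply' measurableSet_Ioo]
      refine measure_mono_null ?_ hx3
      rintro y ⟨hne, hy⟩
      exact hABsub ⟨hne, hmem y hy⟩
    have hgsm : StronglyMeasurable fun y => g (x, y) :=
      hg.comp_measurable measurable_prodMk_left
    -- integrability of g on the slice
    have hgfin : ∫⁻ y in Ioo (-logXi r x) (logXi r x), (‖g (x, y)‖₊ : ℝ≥0∞) < ⊤ := by
      have hH := holder_slice hp1 (volume.restrict (Ioo (-logXi r x) (logXi r x)))
        (fun y => (‖g (x, y)‖₊ : ℝ≥0∞))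
        (hgsm.measurable.nnnorm.coe_nnreal_ennreal).aemeasurable
      rw [Measure.restrict_apply_univ] at hH
      refine lt_of_le_of_lt hH (ENNReal.mul_lt_top ?_ ?_)
      · exact ENNReal.rpow_lt_top_of_nonneg (by positivity) hMx.ne
      · exact ENNReal.rpow_lt_top_of_nonneg hexp hcne
    have hgint : IntegrableOn (fun y => g (x, y)) (Ioo (-logXi r x) (logXi r x)) volume :=
      ⟨hgsm.aestronglyMeasurable, hgfin⟩
    have hu1int : IntegrableOn (fun y => u₁ (x, y)) (Ioo (-logXi r x) (logXi r x)) volume :=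
      hgint.congr hslice_ae.symm
    have hEq : ∫ y in Ioo (-logXi r x) (logXi r x), u₁ (x, y)
        = ∫ y in Ioo (-logXi r x) (logXi r x), g (x, y) := integral_congr_ae hslice_ae
    have hφint : ∀ k, IntegrableOn (fun y => φk k (x, y))
        (Ioo (-logXi r x) (logXi r x)) volume := fun k =>
      (((hφt k).1.continuous.comp
        (continuous_const.prodMk continuous_id)).integrableOn_Icc).mono_set
        Ioo_subset_Icc_self
    -- the quantitative bound
    have hdiffbound : ∀ k, ‖(∫ y in Ioo (-logXi r x) (logXi r x), φk k (x, y)) -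
        ∫ y in Ioo (-logXi r x) (logXi r x), g (x, y)‖ ≤
        ((mK k x) ^ (1/p) * (volume (Ioo (-logXi r x) (logXi r x))) ^ (1 - 1/p)).toReal := by
      intro k
      have h1 : (∫ y in Ioo (-logXi r x) (logXi r x), φk k (x, y)) -
          ∫ y in Ioo (-logXi r x) (logXi r x), g (x, y)
          = ∫ y in Ioo (-logXi r x) (logXi r x), (φk k (x, y) - g (x, y)) :=
        (integral_sub (hφint k) hgint).symm
      rw [h1]
      have h2 := norm_integral_le_lintegral_norm
        (μ := volume.restrict (Ioo (-logXi r x) (logXi r x)))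
        (fun y => φk k (x, y) - g (x, y))
      refine h2.trans ?_
      have h3 : ∫⁻ y in Ioo (-logXi r x) (logXi r x), ENNReal.ofReal ‖φk k (x, y) - g (x, y)‖
          = ∫⁻ y in Ioo (-logXi r x) (logXi r x), (‖g (x, y) - φk k (x, y)‖₊ : ℝ≥0∞) := by
        apply lintegral_congr
        intro y
        rw [ofReal_norm, enorm_eq_nnnorm, ← nnnorm_neg, neg_sub]
      have h4 := holder_slice hp1 (volume.restrict (Ioo (-logXi r x) (logXi r x)))
        (fun y => (‖g (x, y) - φk k (x, y)‖₊ : ℝ≥0∞))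
        ((hgsm.measurable.sub ((hφt k).1.continuous.comp
          (continuous_const.prodMk continuous_id)).measurable).nnnorm.coe_nnreal_ennreal).aemeasurable
      rw [Measure.restrict_apply_univ] at h4
      have h5 : (∫⁻ y in Ioo (-logXi r x) (logXi r x),
          (fun y => (‖g (x, y) - φk k (x, y)‖₊ : ℝ≥0∞)) y ^ p)
          = mK k x := by
        rw [← hmKx k]
      rw [h5] at h4
      have hfin : (mK k x) ^ (1/p) * (volume (Ioo (-logXi r x) (logXi r x))) ^ (1 - 1/p) ≠ ⊤ := by
        apply ENNReal.mul_ne_top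
        · exact ENNReal.rpow_ne_top_of_nonneg (by positivity)
            (lt_of_le_of_lt (ENNReal.le_tsum k) hx1).ne
        · exact ENNReal.rpow_ne_top_of_nonneg hexp hcne
      refine ENNReal.toReal_mono hfin ?_
      rw [h3]
      exact h4
    have htendR : Tendsto (fun k =>
        ((mK k x) ^ (1/p) * (volume (Ioo (-logXi r x) (logXi r x))) ^ (1 - 1/p)).toReal)
        atTop (𝓝 0) := by
      have h1 : Tendsto (fun k => (mK k x) ^ (1/p)) atTop (𝓝 0) := by
        have h := (ENNReal.continuous_rpow_const (y := 1/p)).tendsto 0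
        rw [ENNReal.zero_rpow_of_pos (by positivity)] at h
        exact h.comp hm0
      have h2 : Tendsto (fun k =>
          (mK k x) ^ (1/p) * (volume (Ioo (-logXi r x) (logXi r x))) ^ (1 - 1/p))
          atTop (𝓝 0) := by
        have h := ENNReal.Tendsto.mul_const h1
          (Or.inr (ENNReal.rpow_ne_top_of_nonneg hexp hcne))
        rw [zero_mul] at h
        exact h
      have h3 := (ENNReal.tendsto_toReal (by norm_num : (0:ℝ≥0∞) ≠ ⊤)).comp h2
      exact h3
    have hAk : Tendsto (fun k => ∫ y in Ioo (-logXi r x) (logXi r x), φk k (x, y)) atTop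
        (𝓝 (∫ y in Ioo (-logXi r x) (logXi r x), u₁ (x, y))) := by
      rw [hEq]
      have hsq := squeeze_zero_norm hdiffbound htendR
      exact tendsto_sub_nhds_zero_iff.1 hsq
    exact hAk.div_const _
  -- Fatou
  have hfk_aesm : ∀ k, AEStronglyMeasurable (Fk k)
      (volume.restrict (Ioo (0:ℝ) (1/2))) := fun k => testfun_A_aesm (hφt k).1.continuous
  have hflim_aesm := aestronglyMeasurable_of_tendsto_ae atTop hfk_aesm htend
  have hbound : ∀ k, eLpNorm (Fk k) (ENNReal.ofReal p)
      (volume.restrict (Ioo (0:ℝ) (1/2))) ≤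
      4 * (eLpNorm (fun q : ℝ × ℝ => du₁ q ((0:ℝ),(1:ℝ))) (ENNReal.ofReal p)
        (volume.restrict (logCuspDomain r)) + 1) := by
    intro k
    refine (testfun_key hp1 (hφt k)).trans ?_
    apply mul_le_mul_right
    have hsub : (fun q : ℝ × ℝ => du₁ q ((0:ℝ),(1:ℝ))) -
        (fun q : ℝ × ℝ => du₁ q ((0:ℝ),(1:ℝ)) - fderiv ℝ (φk k) q ((0:ℝ),(1:ℝ)))
        = fun q : ℝ × ℝ => fderiv ℝ (φk k) q ((0:ℝ),(1:ℝ)) := by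
      funext q
      simp
    rw [← hsub]
    refine (eLpNorm_sub_le (p := ENNReal.ofReal p) hDaesm
      (hDaesm.sub (testfun_deriv_cont (hφt k)).aestronglyMeasurable)
      (ENNReal.one_le_ofReal.2 hp1.le)).trans ?_
    exact add_le_add_right (hn2 k) _
  have hliminf := MeasureTheory.Lp.eLpNorm_lim_le_liminf_eLpNorm (p := ENNReal.ofReal p) hfk_aesm _ htend
  have hle : liminf (fun k => eLpNorm (Fk k) (ENNReal.ofReal p)
      (volume.restrict (Ioo (0:ℝ) (1/2)))) atTop ≤
      4 * (eLpNorm (fun q : ℝ × ℝ => du₁ q ((0:ℝ),(1:ℝ))) (ENNReal.ofReal p)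
        (volume.restrict (logCuspDomain r)) + 1) :=
    le_trans (Filter.liminf_le_liminf (Filter.Eventually.of_forall hbound))
      (le_of_eq (Filter.liminf_const _))
  have hfin4 : (4:ℝ≥0∞) * (eLpNorm (fun q : ℝ × ℝ => du₁ q ((0:ℝ),(1:ℝ))) (ENNReal.ofReal p)
      (volume.restrict (logCuspDomain r)) + 1) < ⊤ :=
    ENNReal.mul_lt_top (by norm_num)
      (ENNReal.add_lt_top.2 ⟨(hduL ((0:ℝ),(1:ℝ))).2, by norm_num⟩)
  exact ⟨hflim_aesm, lt_of_le_of_lt (hliminf.trans hle) hfin4⟩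
end
end

section
/- Let 1 < p < ∞ and m > 0, let Ω ⊂ ℝ² be the cusp domain Ω_m, and let u₁ ∈ W^{1,p}_0(Ω). Then for almost every x ∈ (0,1): ∫_{−x^m}^{x^m} u₁(x,y) dy = ∫_{−x^m}^{x^m} (x^m − τ) (∂u₁/∂τ)(x, τ) dτ, and consequently |∫_{−x^m}^{x^m} u₁(x,y) dy| ≤ 2^{(2p−1)/p} ((p−1)/(2p−1))^{(p−1)/p} x^{m(2p−1)/p} ( ∫_{−x^m}^{x^m} |(∂u₁/∂τ)(x,τ)|^p dτ )^{1/p}. -/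
open MeasureTheory Real Set Filter Topology

noncomputable section

/-- The two-dimensional cusp domain `Ω_m`: the bounded domain whose boundary consists of the
curves `y = x^m`, `y = -x^m` for `0 < x < 1` and the circular arc `y² + (x-1)² = 1` for
`1 < x < 2`. -/
def cuspDomain (m : ℝ) : Set (ℝ × ℝ) :=
  {q | (0 < q.1 ∧ q.1 ≤ 1 ∧ |q.2| < q.1 ^ m) ∨ (1 < q.1 ∧ q.2 ^ 2 + (q.1 - 1) ^ 2 < 1)}

open scoped ENNReal NNReal

namespace S18


/-- The cusp part of the domain over `x ∈ (0,1)`. -/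
def Sm (m : ℝ) : Set (ℝ × ℝ) := {q | q.1 ∈ Ioo (0:ℝ) 1 ∧ q.2 ∈ Ioo (-(q.1 ^ m)) (q.1 ^ m)}

lemma Sm_subset (m : ℝ) : Sm m ⊆ cuspDomain m := by
  rintro ⟨x, y⟩ ⟨hx, hy⟩
  exact Or.inl ⟨hx.1, hx.2.le, abs_lt.2 ⟨by simpa using hy.1, hy.2⟩⟩

lemma measurable_rpow_fst {m : ℝ} (hm : 0 ≤ m) : Measurable (fun q : ℝ × ℝ => q.1 ^ m) :=
  ((continuous_id.rpow_const fun _ => Or.inr hm).measurable).comp measurable_fst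

lemma Sm_measurable {m : ℝ} (hm : 0 ≤ m) : MeasurableSet (Sm m) := by
  have h1 : MeasurableSet {q : ℝ × ℝ | q.1 ∈ Ioo (0:ℝ) 1} :=
    measurable_fst measurableSet_Ioo
  have h2 : MeasurableSet {q : ℝ × ℝ | -(q.1 ^ m) < q.2} :=
    measurableSet_lt (measurable_rpow_fst hm).neg measurable_snd
  have h3 : MeasurableSet {q : ℝ × ℝ | q.2 < q.1 ^ m} :=
    measurableSet_lt measurable_snd (measurable_rpow_fst hm)
  have : Sm m = {q : ℝ × ℝ | q.1 ∈ Ioo (0:ℝ) 1} ∩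
      ({q : ℝ × ℝ | -(q.1 ^ m) < q.2} ∩ {q : ℝ × ℝ | q.2 < q.1 ^ m}) := by
    ext q; simp [Sm, and_assoc, mem_Ioo]
  rw [this]; exact h1.inter (h2.inter h3)

lemma cusp_measurable {m : ℝ} (hm : 0 ≤ m) : MeasurableSet (cuspDomain m) := by
  have : cuspDomain m = ({q : ℝ × ℝ | 0 < q.1} ∩ {q | q.1 ≤ 1} ∩ {q | |q.2| < q.1 ^ m}) ∪
      ({q : ℝ × ℝ | 1 < q.1} ∩ {q | q.2 ^ 2 + (q.1 - 1) ^ 2 < 1}) := by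
    ext q; simp [cuspDomain, and_assoc]
  rw [this]
  exact (((measurableSet_lt measurable_const measurable_fst).inter
      (measurableSet_le measurable_fst measurable_const)).inter
      (measurableSet_lt measurable_snd.abs (measurable_rpow_fst hm))).union
    ((measurableSet_lt measurable_const measurable_fst).inter
      (measurableSet_lt (by measurability) measurable_const))

lemma cusp_subset (m : ℝ) (hm : 0 < m) :
    cuspDomain m ⊆ Ioo (0:ℝ) 2 ×ˢ Ioo (-1:ℝ) 1 := by
  rintro ⟨x, y⟩ (⟨h0, h1, h2⟩ | ⟨h1, h2⟩)
  · have hx1 : x ^ m ≤ 1 := Real.rpow_le_one h0.le h1 hm.le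
    have := lt_of_lt_of_le h2 hx1
    exact ⟨⟨h0, by linarith⟩, abs_lt.1 this⟩
  · constructor
    · constructor
      · linarith
      · nlinarith [sq_nonneg y]
    · have : y ^ 2 < 1 := by nlinarith [sq_nonneg (x - 1)]
      exact (sq_lt_one_iff_abs_lt_one y).1 this |> abs_lt.1

lemma volume_cusp_lt_top (m : ℝ) (hm : 0 < m) : volume (cuspDomain m) < ⊤ := by
  refine lt_of_le_of_lt (measure_mono (cusp_subset m hm)) ?_
  rw [Measure.volume_eq_prod, Measure.prod_prod]
  simp [Real.volume_Ioo]
  norm_num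

lemma testfun_eq_zero {m : ℝ} {φ : ℝ × ℝ → ℝ} (hφ : TestFun (cuspDomain m) φ)
    {x y : ℝ} (hx : x ∈ Ioo (0:ℝ) 1) (hy : x ^ m ≤ |y|) : φ (x, y) = 0 := by
  apply image_eq_zero_of_notMem_tsupport
  intro hmem
  have := hφ.2.2 hmem
  rcases this with ⟨_, _, h⟩ | ⟨h, _⟩
  · exact absurd h (not_lt.2 hy)
  · exact absurd hx.2 (not_lt.2 h.le)

lemma hasDerivAt_slice {φ : ℝ × ℝ → ℝ} (hφ : ContDiff ℝ (⊤ : ℕ∞) φ) (x τ : ℝ) :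
    HasDerivAt (fun t => φ (x, t)) (fderiv ℝ φ (x, τ) (0, 1)) τ := by
  have h1 : HasDerivAt (fun t : ℝ => ((x, t) : ℝ × ℝ)) (0, 1) τ :=
    HasDerivAt.prodMk (hasDerivAt_const τ x) (hasDerivAt_id τ)
  exact (((hφ.differentiable (by simp)) (x, τ)).hasFDerivAt).comp_hasDerivAt τ h1

lemma continuous_dslice {φ : ℝ × ℝ → ℝ} (hφ : ContDiff ℝ (⊤ : ℕ∞) φ) (x : ℝ) :
    Continuous fun τ : ℝ => fderiv ℝ φ (x, τ) (0, 1) := by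
  have h1 : Continuous (fderiv ℝ φ) := (hφ.fderiv_right (m := (⊤ : ℕ∞)) (by simp)).continuous
  exact (h1.comp (continuous_const.prodMk continuous_id)).clm_apply continuous_const

lemma testfun_slice {m : ℝ} (hm : 0 < m) {φ : ℝ × ℝ → ℝ} (hφ : TestFun (cuspDomain m) φ)
    {x : ℝ} (hx : x ∈ Ioo (0:ℝ) 1) :
    ∫ y in Ioo (-(x ^ m)) (x ^ m), φ (x, y)
      = ∫ τ in Ioo (-(x ^ m)) (x ^ m), (x ^ m - τ) * fderiv ℝ φ (x, τ) (0, 1) := by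
  set a := x ^ m with ha
  have ha0 : 0 < a := Real.rpow_pos_of_pos hx.1 m
  have hsm : ContDiff ℝ (⊤ : ℕ∞) φ := hφ.1
  have hcφ : Continuous fun τ : ℝ => φ (x, τ) :=
    hsm.continuous.comp (continuous_const.prodMk continuous_id)
  have hcd : Continuous fun τ : ℝ => (a - τ) * fderiv ℝ φ (x, τ) (0, 1) :=
    ((continuous_const.sub continuous_id).mul (continuous_dslice hsm x))
  have hderF : ∀ τ ∈ uIcc (-a) a, HasDerivAt (fun t => (a - t) * φ (x, t))
      ((a - τ) * (fderiv ℝ φ (x, τ) (0, 1)) - φ (x, τ)) τ := by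
    intro τ _
    have := (((hasDerivAt_id τ).const_sub a).mul (hasDerivAt_slice hsm x τ))
    refine this.congr_deriv ?_
    simp only [id]
    ring
  have hint : IntervalIntegrable (fun τ => (a - τ) * (fderiv ℝ φ (x, τ) (0, 1)) - φ (x, τ))
      volume (-a) a := (hcd.sub hcφ).intervalIntegrable _ _
  have hFTC := intervalIntegral.integral_eq_sub_of_hasDerivAt hderF hint
  have hz1 : φ (x, a) = 0 := testfun_eq_zero hφ hx (by rw [abs_of_pos ha0])
  have hz2 : φ (x, -a) = 0 := testfun_eq_zero hφ hx (by rw [abs_neg, abs_of_pos ha0])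
  rw [hz1, hz2] at hFTC
  simp only [mul_zero, sub_zero] at hFTC
  have hsub := intervalIntegral.integral_sub (hcd.intervalIntegrable (μ := volume) (-a) a)
    (hcφ.intervalIntegrable (μ := volume) (-a) a)
  rw [hsub] at hFTC
  have heq : (∫ τ in (-a)..a, (a - τ) * fderiv ℝ φ (x, τ) (0, 1))
      = ∫ τ in (-a)..a, φ (x, τ) := by linarith
  have hle : (-a : ℝ) ≤ a := by linarith
  rw [intervalIntegral.integral_of_le hle, intervalIntegral.integral_of_le hle,
    integral_Ioc_eq_integral_Ioo, integral_Ioc_eq_integral_Ioo] at heq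
  exact heq.symm

lemma indicator_slice {m : ℝ} {β : Type*} [Zero β] (f : ℝ × ℝ → β) {x : ℝ}
    (hx : x ∈ Ioo (0:ℝ) 1) :
    (fun y => (Sm m).indicator f (x, y))
      = (Ioo (-(x ^ m)) (x ^ m)).indicator (fun y => f (x, y)) := by
  funext y
  by_cases hy : y ∈ Ioo (-(x ^ m)) (x ^ m)
  · rw [indicator_of_mem (show (x, y) ∈ Sm m from ⟨hx, hy⟩), indicator_of_mem hy]
  · rw [indicator_of_notMem (fun h => hy h.2), indicator_of_notMem hy]

lemma indicator_slice_zero {m : ℝ} {β : Type*} [Zero β] (f : ℝ × ℝ → β) {x : ℝ}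
    (hx : x ∉ Ioo (0:ℝ) 1) :
    (fun y => (Sm m).indicator f (x, y)) = fun _ => (0 : β) := by
  funext y
  exact indicator_of_notMem (fun h => hx h.1) f

lemma lintegral_Sm {m : ℝ} (hm : 0 < m) {F : ℝ × ℝ → ℝ≥0∞} (hF : Measurable F) :
    ∫⁻ x in Ioo (0:ℝ) 1, ∫⁻ y in Ioo (-(x ^ m)) (x ^ m), F (x, y)
      = ∫⁻ z in Sm m, F z := by
  rw [← lintegral_indicator (Sm_measurable hm.le) F]
  rw [Measure.volume_eq_prod]
  rw [lintegral_prod _ ((hF.indicator (Sm_measurable hm.le)).aemeasurable)]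
  rw [← MeasureTheory.lintegral_indicator measurableSet_Ioo]
  congr 1
  funext x
  by_cases hx : x ∈ Ioo (0:ℝ) 1
  · rw [indicator_of_mem hx]
    refine Eq.symm ?_
    calc ∫⁻ y, (Sm m).indicator F (x, y)
        = ∫⁻ y, (Ioo (-(x ^ m)) (x ^ m)).indicator (fun y => F (x, y)) y := by
          rw [lintegral_congr fun y => congrFun (indicator_slice F hx) y]
      _ = ∫⁻ y in Ioo (-(x ^ m)) (x ^ m), F (x, y) :=
          lintegral_indicator measurableSet_Ioo _
  · rw [indicator_of_notMem hx]
    refine Eq.symm ?_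
    calc ∫⁻ y, (Sm m).indicator F (x, y)
        = ∫⁻ _y : ℝ, (0:ℝ≥0∞) := by
          rw [lintegral_congr fun y => congrFun (indicator_slice_zero F hx) y]
      _ = 0 := lintegral_zero

lemma slice_integrable {m : ℝ} (hm : 0 < m) {f : ℝ × ℝ → ℝ}
    (hf : IntegrableOn f (Sm m) volume) :
    ∀ᵐ x : ℝ ∂volume, x ∈ Ioo (0:ℝ) 1 →
      IntegrableOn (fun y => f (x, y)) (Ioo (-(x ^ m)) (x ^ m)) volume := by
  have h1 : Integrable ((Sm m).indicator f) volume :=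
    (integrable_indicator_iff (Sm_measurable hm.le)).2 hf
  rw [Measure.volume_eq_prod] at h1
  filter_upwards [h1.prod_right_ae] with x hx hx01
  rw [indicator_slice f hx01, integrable_indicator_iff measurableSet_Ioo] at hx
  exact hx

lemma slice_ae_eq {m : ℝ} (hm : 0 < m) {f g : ℝ × ℝ → ℝ}
    (h : f =ᵐ[volume.restrict (cuspDomain m)] g) :
    ∀ᵐ x : ℝ ∂volume, x ∈ Ioo (0:ℝ) 1 →
      (fun y => f (x, y)) =ᵐ[volume.restrict (Ioo (-(x ^ m)) (x ^ m))] fun y => g (x, y) := by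
  have h0 : ∀ᵐ z ∂(volume : Measure (ℝ × ℝ)), z ∈ cuspDomain m → f z = g z :=
    (ae_restrict_iff' (cusp_measurable hm.le)).1 h
  rw [Measure.volume_eq_prod] at h0
  filter_upwards [Measure.ae_ae_of_ae_prod h0] with x hx hx01
  apply (ae_restrict_iff' measurableSet_Ioo).2
  filter_upwards [hx] with y hy hymem
  exact hy (Sm_subset m ⟨hx01, hymem⟩)

lemma weight_integral {a q : ℝ} (ha : 0 < a) (hq : 1 < q) :
    ∫ τ in Ioo (-a) a, |a - τ| ^ q = (2 * a) ^ (q + 1) / (q + 1) := by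
  rw [← integral_Ioc_eq_integral_Ioo,
    ← intervalIntegral.integral_of_le (by linarith : -a ≤ a)]
  have h1 : (∫ τ in (-a)..a, |a - τ| ^ q) = ∫ t in (a - a)..(a - -a), |t| ^ q :=
    intervalIntegral.integral_comp_sub_left (fun t => |t| ^ q) a
  rw [h1]
  have h2 : a - a = 0 := by ring
  have h3 : a - -a = 2 * a := by ring
  rw [h2, h3]
  have h4 : (∫ t in (0:ℝ)..(2 * a), |t| ^ q) = ∫ t in (0:ℝ)..(2 * a), t ^ q := by
    apply intervalIntegral.integral_congr
    intro t ht
    rw [uIcc_of_le (by linarith : (0:ℝ) ≤ 2 * a)] at ht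
    show |t| ^ q = t ^ q
    rw [abs_of_nonneg ht.1]
  rw [h4, integral_rpow (Or.inl (by linarith : (-1:ℝ) < q)),
    Real.zero_rpow (by linarith : q + 1 ≠ 0)]
  ring

lemma holder_slice {p a : ℝ} (hp : 1 < p) (ha : 0 < a) {g : ℝ → ℝ}
    (hg : MemLp g (ENNReal.ofReal p) (volume.restrict (Ioo (-a) a))) :
    |∫ τ in Ioo (-a) a, (a - τ) * g τ|
      ≤ ((2 * a) ^ ((2 * p - 1) / p) * ((p - 1) / (2 * p - 1)) ^ ((p - 1) / p)) *
        (∫ τ in Ioo (-a) a, |g τ| ^ p) ^ (1 / p) := by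
  haveI : IsFiniteMeasure (volume.restrict (Ioo (-a) a)) :=
    ⟨by rw [Measure.restrict_apply_univ]; simp [Real.volume_Ioo]⟩
  set q : ℝ := p / (p - 1) with hqdef
  have hpq : q.HolderConjugate p := (Real.HolderConjugate.conjExponent hp).symm
  have hp0 : 0 < p := by linarith
  have hp1' : 0 < p - 1 := by linarith
  have hp2 : 0 < 2 * p - 1 := by linarith
  have hq1 : 1 < q := by rw [hqdef, one_lt_div hp1']; linarith
  -- the weight is in L^q
  have hwm : MemLp (fun τ : ℝ => a - τ) (ENNReal.ofReal q)
      (volume.restrict (Ioo (-a) a)) := by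
    refine MemLp.of_bound ((continuous_const.sub continuous_id).aestronglyMeasurable) (2 * a) ?_
    apply (ae_restrict_iff' measurableSet_Ioo).2
    refine ae_of_all _ fun τ hτ => ?_
    rw [Real.norm_eq_abs, abs_of_nonneg (by linarith [hτ.2] : (0:ℝ) ≤ a - τ)]
    linarith [hτ.1]
  have hstep1 : |∫ τ in Ioo (-a) a, (a - τ) * g τ|
      ≤ ∫ τ in Ioo (-a) a, ‖a - τ‖ * ‖g τ‖ := by
    calc |∫ τ in Ioo (-a) a, (a - τ) * g τ| ≤ ∫ τ in Ioo (-a) a, ‖(a - τ) * g τ‖ := by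
          rw [← Real.norm_eq_abs]; exact norm_integral_le_integral_norm _
      _ = ∫ τ in Ioo (-a) a, ‖a - τ‖ * ‖g τ‖ := by
          simp only [norm_mul]
  have hstep2 := integral_mul_norm_le_Lp_mul_Lq hpq hwm hg
  -- compute the weight integral
  have hW : (∫ τ in Ioo (-a) a, ‖a - τ‖ ^ q) = (2 * a) ^ (q + 1) / (q + 1) := by
    simp only [Real.norm_eq_abs]
    exact weight_integral ha hq1
  have hGeq : (∫ τ in Ioo (-a) a, ‖g τ‖ ^ p) = ∫ τ in Ioo (-a) a, |g τ| ^ p := by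
    simp only [Real.norm_eq_abs]
  -- exponent arithmetic
  have e1 : 1 / q = (p - 1) / p := by rw [hqdef]; field_simp
  have e2 : q + 1 = (2 * p - 1) / (p - 1) := by rw [hqdef]; field_simp; ring
  have e3 : (q + 1) * (1 / q) = (2 * p - 1) / p := by
    rw [e2, e1]
    field_simp
  have h2a : (0:ℝ) ≤ 2 * a := by linarith
  have hconst : ((2 * a) ^ (q + 1) / (q + 1)) ^ (1 / q)
      = (2 * a) ^ ((2 * p - 1) / p) * ((p - 1) / (2 * p - 1)) ^ ((p - 1) / p) := by
    rw [Real.div_rpow (Real.rpow_nonneg h2a _) (by linarith : (0:ℝ) ≤ q + 1)]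
    rw [← Real.rpow_mul h2a, e3]
    rw [div_eq_mul_inv ((2*a) ^ _), ← Real.inv_rpow (by linarith : (0:ℝ) ≤ q + 1)]
    rw [e2, inv_div, e1]
  calc |∫ τ in Ioo (-a) a, (a - τ) * g τ|
      ≤ ∫ τ in Ioo (-a) a, ‖a - τ‖ * ‖g τ‖ := hstep1
    _ ≤ (∫ τ in Ioo (-a) a, ‖a - τ‖ ^ q) ^ (1 / q) *
        (∫ τ in Ioo (-a) a, ‖g τ‖ ^ p) ^ (1 / p) := hstep2
    _ = ((2 * a) ^ ((2 * p - 1) / p) * ((p - 1) / (2 * p - 1)) ^ ((p - 1) / p)) *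
        (∫ τ in Ioo (-a) a, |g τ| ^ p) ^ (1 / p) := by
        rw [hW, hGeq, hconst]


end S18

/-- For `u₁ ∈ W^{1,p}_0(Ω_m)`, for a.e. `x ∈ (0,1)` one has
`∫_{-x^m}^{x^m} u₁(x,y) dy = ∫_{-x^m}^{x^m} (x^m - τ) ∂u₁/∂τ(x,τ) dτ` and the Hölder bound
`|∫_{-x^m}^{x^m} u₁(x,y) dy| ≤ 2^{(2p-1)/p} ((p-1)/(2p-1))^{(p-1)/p} x^{m(2p-1)/p}
(∫_{-x^m}^{x^m} |∂u₁/∂τ(x,τ)|^p dτ)^{1/p}`. -/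
theorem statement18 (p m : ℝ) (hp1 : 1 < p) (hm : 0 < m)
    (u₁ : ℝ × ℝ → ℝ) (du₁ : ℝ × ℝ → (ℝ × ℝ) →L[ℝ] ℝ)
    (hu₁ : MemW1p0 p (cuspDomain m) u₁ du₁) :
    ∀ᵐ x ∂(volume.restrict (Ioo (0 : ℝ) 1)),
      (∫ y in Ioo (-(x ^ m)) (x ^ m), u₁ (x, y))
          = (∫ τ in Ioo (-(x ^ m)) (x ^ m), (x ^ m - τ) * du₁ (x, τ) (0, 1)) ∧
        |∫ y in Ioo (-(x ^ m)) (x ^ m), u₁ (x, y)|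
          ≤ 2 ^ ((2 * p - 1) / p) * ((p - 1) / (2 * p - 1)) ^ ((p - 1) / p) *
            x ^ (m * (2 * p - 1) / p) *
            (∫ τ in Ioo (-(x ^ m)) (x ^ m), |du₁ (x, τ) (0, 1)| ^ p) ^ (1 / p) := by
  classical
  obtain ⟨hu_mem, hdu_mem, -, ψ, hψtest, hψ0, hψ1⟩ := hu₁
  have hp0 : (0:ℝ) < p := by linarith
  have hpe1 : (1:ℝ≥0∞) ≤ ENNReal.ofReal p := by
    rw [ENNReal.one_le_ofReal]; exact hp1.le
  have hΩmeas : MeasurableSet (cuspDomain m) := S18.cusp_measurable hm.le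
  have hΩfin : volume (cuspDomain m) < ⊤ := S18.volume_cusp_lt_top m hm
  haveI hfinΩ : IsFiniteMeasure (volume.restrict (cuspDomain m)) :=
    ⟨by rwa [Measure.restrict_apply_univ]⟩
  have hD_mem : MemLp (fun z => du₁ z (0, 1)) (ENNReal.ofReal p)
      (volume.restrict (cuspDomain m)) := hdu_mem (0, 1)
  set ut : ℝ × ℝ → ℝ := hu_mem.1.mk u₁ with hut_def
  set Dt : ℝ × ℝ → ℝ := hD_mem.1.mk _ with hDt_def
  have hut_sm : StronglyMeasurable ut := hu_mem.1.stronglyMeasurable_mk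
  have hDt_sm : StronglyMeasurable Dt := hD_mem.1.stronglyMeasurable_mk
  have hut_ae : u₁ =ᵐ[volume.restrict (cuspDomain m)] ut := hu_mem.1.ae_eq_mk
  have hDt_ae : (fun z => du₁ z (0, 1)) =ᵐ[volume.restrict (cuspDomain m)] Dt :=
    hD_mem.1.ae_eq_mk
  have hut_mem : MemLp ut (ENNReal.ofReal p) (volume.restrict (cuspDomain m)) :=
    MemLp.ae_eq hut_ae hu_mem
  have hDt_mem : MemLp Dt (ENNReal.ofReal p) (volume.restrict (cuspDomain m)) :=
    MemLp.ae_eq hDt_ae hD_mem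
  have hmono : volume.restrict (S18.Sm m) ≤ volume.restrict (cuspDomain m) :=
    Measure.restrict_mono (S18.Sm_subset m) le_rfl
  have hut_int : IntegrableOn ut (S18.Sm m) volume :=
    (memLp_one_iff_integrable.1 (hut_mem.mono_exponent hpe1)).mono_measure hmono
  have hDt_int : IntegrableOn Dt (S18.Sm m) volume :=
    (memLp_one_iff_integrable.1 (hDt_mem.mono_exponent hpe1)).mono_measure hmono
  have h_sl_ut_int := S18.slice_integrable hm hut_int
  have h_sl_Dt_int := S18.slice_integrable hm hDt_int
  have h_sl_u_eq := S18.slice_ae_eq hm hut_ae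
  have h_sl_D_eq := S18.slice_ae_eq hm hDt_ae
  have hpe_ne0 : (ENNReal.ofReal p) ≠ 0 := by
    rw [Ne, ENNReal.ofReal_eq_zero]; exact not_le.2 hp0
  -- a.e. slice membership in L^p for Dt
  have hDtp_meas : Measurable fun z : ℝ × ℝ => (‖Dt z‖₊ : ℝ≥0∞) ^ p :=
    ENNReal.continuous_rpow_const.measurable.comp hDt_sm.measurable.enorm
  have hDt_lint : ∫⁻ z in cuspDomain m, (‖Dt z‖₊ : ℝ≥0∞) ^ p < ⊤ := by
    have h := (eLpNorm_lt_top_iff_lintegral_rpow_enorm_lt_top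
      hpe_ne0 ENNReal.ofReal_ne_top).1 hDt_mem.2
    rwa [ENNReal.toReal_ofReal hp0.le] at h
  have h_sl_Dt_mem : ∀ᵐ x : ℝ ∂volume, x ∈ Ioo (0:ℝ) 1 →
      MemLp (fun τ => Dt (x, τ)) (ENNReal.ofReal p)
        (volume.restrict (Ioo (-(x ^ m)) (x ^ m))) := by
    have hGm : Measurable ((S18.Sm m).indicator fun z => (‖Dt z‖₊ : ℝ≥0∞) ^ p) :=
      hDtp_meas.indicator (S18.Sm_measurable hm.le)
    have hgm : Measurable fun x : ℝ =>
        ∫⁻ y, (S18.Sm m).indicator (fun z => (‖Dt z‖₊ : ℝ≥0∞) ^ p) (x, y) :=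
      hGm.lintegral_prod_right'
    have hgfin : (∫⁻ x : ℝ, ∫⁻ y,
        (S18.Sm m).indicator (fun z => (‖Dt z‖₊ : ℝ≥0∞) ^ p) (x, y)) ≠ ⊤ := by
      rw [← lintegral_prod _ hGm.aemeasurable, ← Measure.volume_eq_prod,
        lintegral_indicator (S18.Sm_measurable hm.le)]
      exact ((lintegral_mono_set (S18.Sm_subset m)).trans_lt hDt_lint).ne
    filter_upwards [ae_lt_top hgm hgfin] with x hx hx01
    refine ⟨(hDt_sm.comp_measurable measurable_prodMk_left).aestronglyMeasurable, ?_⟩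
    rw [eLpNorm_lt_top_iff_lintegral_rpow_enorm_lt_top hpe_ne0 ENNReal.ofReal_ne_top,
      ENNReal.toReal_ofReal hp0.le]
    calc ∫⁻ τ in Ioo (-(x ^ m)) (x ^ m), (‖Dt (x, τ)‖₊ : ℝ≥0∞) ^ p
        = ∫⁻ y, (S18.Sm m).indicator (fun z => (‖Dt z‖₊ : ℝ≥0∞) ^ p) (x, y) := by
          rw [← lintegral_indicator measurableSet_Ioo]
          exact lintegral_congr fun y =>
            (congrFun (S18.indicator_slice (fun z => (‖Dt z‖₊ : ℝ≥0∞) ^ p) hx01) y).symm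
      _ < ⊤ := hx
  -- the two integral functions and their measurable avatars
  set A : ℝ → ℝ := fun x => ∫ y in Ioo (-(x ^ m)) (x ^ m), ut (x, y) with hA
  set B : ℝ → ℝ := fun x => ∫ τ in Ioo (-(x ^ m)) (x ^ m), (x ^ m - τ) * Dt (x, τ) with hB
  set W : ℝ × ℝ → ℝ := fun z => (z.1 ^ m - z.2) * Dt z with hWdef
  have hW_sm : StronglyMeasurable W :=
    (((S18.measurable_rpow_fst hm.le).sub measurable_snd).mul
      hDt_sm.measurable).stronglyMeasurable
  have hA'_sm : StronglyMeasurable fun x : ℝ => ∫ y, (S18.Sm m).indicator ut (x, y) :=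
    (hut_sm.indicator (S18.Sm_measurable hm.le)).integral_prod_right'
  have hB'_sm : StronglyMeasurable fun x : ℝ => ∫ y, (S18.Sm m).indicator W (x, y) :=
    (hW_sm.indicator (S18.Sm_measurable hm.le)).integral_prod_right'
  have hA'eq : ∀ x ∈ Ioo (0:ℝ) 1, A x = ∫ y, (S18.Sm m).indicator ut (x, y) := by
    intro x hx
    simp only [hA]
    calc (∫ y in Ioo (-(x ^ m)) (x ^ m), ut (x, y))
        = ∫ y, (Ioo (-(x ^ m)) (x ^ m)).indicator (fun y => ut (x, y)) y :=
          (integral_indicator measurableSet_Ioo).symm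
      _ = ∫ y, (S18.Sm m).indicator ut (x, y) :=
          integral_congr_ae (Eventually.of_forall fun y =>
            (congrFun (S18.indicator_slice ut hx) y).symm)
  have hB'eq : ∀ x ∈ Ioo (0:ℝ) 1, B x = ∫ y, (S18.Sm m).indicator W (x, y) := by
    intro x hx
    simp only [hB]
    calc (∫ τ in Ioo (-(x ^ m)) (x ^ m), (x ^ m - τ) * Dt (x, τ))
        = ∫ y, (Ioo (-(x ^ m)) (x ^ m)).indicator (fun τ => W (x, τ)) y :=
          (integral_indicator measurableSet_Ioo).symm
      _ = ∫ y, (S18.Sm m).indicator W (x, y) :=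
          integral_congr_ae (Eventually.of_forall fun y =>
            (congrFun (S18.indicator_slice W hx) y).symm)
  -- constant M
  set M : ℝ≥0∞ := (volume (cuspDomain m)) ^ (1 - 1 / p) with hM
  have hM_ne : M ≠ ⊤ := by
    rw [hM]
    exact (ENNReal.rpow_lt_top_of_nonneg
      (by rw [sub_nonneg, div_le_one hp0]; linarith) hΩfin.ne).ne
  have key : ∀ f : ℝ × ℝ → ℝ, AEStronglyMeasurable f (volume.restrict (cuspDomain m)) →
      (∫⁻ z in cuspDomain m, (‖f z‖₊ : ℝ≥0∞))
        ≤ eLpNorm f (ENNReal.ofReal p) (volume.restrict (cuspDomain m)) * M := by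
    intro f hf
    have h1 := eLpNorm_le_eLpNorm_mul_rpow_measure_univ hpe1 hf
    rw [eLpNorm_one_eq_lintegral_enorm] at h1
    refine h1.trans_eq ?_
    congr 1
    rw [Measure.restrict_apply_univ, hM]
    congr 1
    simp [ENNReal.toReal_ofReal hp0.le]
  -- the main estimate for each n
  have main : ∀ n : ℕ,
      (∫⁻ x in Ioo (0:ℝ) 1, (‖A x - B x‖₊ : ℝ≥0∞))
        ≤ eLpNorm (fun z => u₁ z - ψ n z) (ENNReal.ofReal p)
            (volume.restrict (cuspDomain m)) * M
          + 2 * (eLpNorm (fun z => du₁ z (0, 1) - fderiv ℝ (ψ n) z (0, 1))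
              (ENNReal.ofReal p) (volume.restrict (cuspDomain m)) * M) := by
    intro n
    obtain ⟨hψsm, hψcs, hψsupp⟩ := hψtest n
    have hψc : Continuous (ψ n) := hψsm.continuous
    have hdψc : Continuous fun z : ℝ × ℝ => fderiv ℝ (ψ n) z (0, 1) :=
      (hψsm.fderiv_right (m := (⊤ : ℕ∞)) (by simp)).continuous.clm_apply continuous_const
    set F₁ : ℝ × ℝ → ℝ≥0∞ := fun z => (‖ut z - ψ n z‖₊ : ℝ≥0∞) with hF₁
    set F₂ : ℝ × ℝ → ℝ≥0∞ :=
      fun z => (‖Dt z - fderiv ℝ (ψ n) z (0, 1)‖₊ : ℝ≥0∞) with hF₂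
    have hF₁m : Measurable F₁ := (hut_sm.measurable.sub hψc.measurable).enorm
    have hF₂m : Measurable F₂ := (hDt_sm.measurable.sub hdψc.measurable).enorm
    set g₁ : ℝ → ℝ≥0∞ := fun x => ∫⁻ y, (S18.Sm m).indicator F₁ (x, y) with hg₁
    set g₂ : ℝ → ℝ≥0∞ := fun x => ∫⁻ y, (S18.Sm m).indicator F₂ (x, y) with hg₂
    have hg₁m : Measurable g₁ :=
      (hF₁m.indicator (S18.Sm_measurable hm.le)).lintegral_prod_right'
    have hg₂m : Measurable g₂ :=
      (hF₂m.indicator (S18.Sm_measurable hm.le)).lintegral_prod_right'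
    have hg₁x : ∀ x ∈ Ioo (0:ℝ) 1,
        g₁ x = ∫⁻ y in Ioo (-(x ^ m)) (x ^ m), F₁ (x, y) := by
      intro x hx
      simp only [hg₁]
      rw [lintegral_congr fun y => congrFun (S18.indicator_slice F₁ hx) y,
        lintegral_indicator measurableSet_Ioo]
    have hg₂x : ∀ x ∈ Ioo (0:ℝ) 1,
        g₂ x = ∫⁻ y in Ioo (-(x ^ m)) (x ^ m), F₂ (x, y) := by
      intro x hx
      simp only [hg₂]
      rw [lintegral_congr fun y => congrFun (S18.indicator_slice F₂ hx) y,
        lintegral_indicator measurableSet_Ioo]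
    have step1 : ∀ᵐ x ∂volume.restrict (Ioo (0:ℝ) 1),
        (‖A x - B x‖₊ : ℝ≥0∞) ≤ g₁ x + 2 * g₂ x := by
      filter_upwards [ae_restrict_of_ae h_sl_ut_int, ae_restrict_of_ae h_sl_Dt_int,
        ae_restrict_mem measurableSet_Ioo] with x hint1 hint2 hx01
      have ha0 : (0:ℝ) < x ^ m := Real.rpow_pos_of_pos hx01.1 m
      have ha1 : x ^ m ≤ 1 := Real.rpow_le_one hx01.1.le hx01.2.le hm.le
      have hiu : IntegrableOn (fun y => ut (x, y)) (Ioo (-(x ^ m)) (x ^ m)) volume :=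
        hint1 hx01
      have hiD : IntegrableOn (fun y => Dt (x, y)) (Ioo (-(x ^ m)) (x ^ m)) volume :=
        hint2 hx01
      have hIψ : IntegrableOn (fun y => ψ n (x, y)) (Ioo (-(x ^ m)) (x ^ m)) volume :=
        ((hψc.comp (continuous_const.prodMk continuous_id)).integrableOn_Icc).mono_set
          Ioo_subset_Icc_self
      have hIdψ : IntegrableOn
          (fun τ => (x ^ m - τ) * fderiv ℝ (ψ n) (x, τ) (0, 1))
          (Ioo (-(x ^ m)) (x ^ m)) volume :=
        (((continuous_const.sub continuous_id).mul
          (hdψc.comp (continuous_const.prodMk continuous_id))).integrableOn_Icc).mono_set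
          Ioo_subset_Icc_self
      have hwbd : ∀ᵐ τ ∂volume.restrict (Ioo (-(x ^ m)) (x ^ m)), ‖x ^ m - τ‖ ≤ 2 := by
        apply (ae_restrict_iff' measurableSet_Ioo).2
        refine ae_of_all _ fun τ hτ => ?_
        rw [Real.norm_eq_abs, abs_of_nonneg (by linarith [hτ.2] : (0:ℝ) ≤ x ^ m - τ)]
        linarith [hτ.1]
      have hIDw : IntegrableOn (fun τ => (x ^ m - τ) * Dt (x, τ))
          (Ioo (-(x ^ m)) (x ^ m)) volume :=
        Integrable.bdd_mul hiD
          ((continuous_const.sub continuous_id).aestronglyMeasurable) hwbd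
      have hiden := S18.testfun_slice hm ⟨hψsm, hψcs, hψsupp⟩ hx01
      have key1 : (‖A x - ∫ y in Ioo (-(x ^ m)) (x ^ m), ψ n (x, y)‖₊ : ℝ≥0∞)
          ≤ ∫⁻ y in Ioo (-(x ^ m)) (x ^ m), F₁ (x, y) := by
        have hsub : A x - (∫ y in Ioo (-(x ^ m)) (x ^ m), ψ n (x, y))
            = ∫ y in Ioo (-(x ^ m)) (x ^ m), (ut (x, y) - ψ n (x, y)) := by
          simp only [hA]; rw [integral_sub hiu hIψ]
        rw [hsub]
        exact enorm_integral_le_lintegral_enorm _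
      have key2 : (‖(∫ τ in Ioo (-(x ^ m)) (x ^ m),
            (x ^ m - τ) * fderiv ℝ (ψ n) (x, τ) (0, 1)) - B x‖₊ : ℝ≥0∞)
          ≤ 2 * ∫⁻ τ in Ioo (-(x ^ m)) (x ^ m), F₂ (x, τ) := by
        have hsub : (∫ τ in Ioo (-(x ^ m)) (x ^ m),
              (x ^ m - τ) * fderiv ℝ (ψ n) (x, τ) (0, 1)) - B x
            = ∫ τ in Ioo (-(x ^ m)) (x ^ m),
                ((x ^ m - τ) * fderiv ℝ (ψ n) (x, τ) (0, 1)
                  - (x ^ m - τ) * Dt (x, τ)) := by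
          simp only [hB]; rw [integral_sub hIdψ hIDw]
        rw [hsub]
        calc (‖∫ τ in Ioo (-(x ^ m)) (x ^ m),
              ((x ^ m - τ) * fderiv ℝ (ψ n) (x, τ) (0, 1)
                - (x ^ m - τ) * Dt (x, τ))‖₊ : ℝ≥0∞)
            ≤ ∫⁻ τ in Ioo (-(x ^ m)) (x ^ m),
                (‖(x ^ m - τ) * fderiv ℝ (ψ n) (x, τ) (0, 1)
                  - (x ^ m - τ) * Dt (x, τ)‖₊ : ℝ≥0∞) :=
              enorm_integral_le_lintegral_enorm _
          _ ≤ ∫⁻ τ in Ioo (-(x ^ m)) (x ^ m), 2 * F₂ (x, τ) := by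
              refine setLIntegral_mono (measurable_const.mul
                (hF₂m.comp measurable_prodMk_left)) fun τ hτ => ?_
              have habs : ‖x ^ m - τ‖ ≤ 2 := by
                rw [Real.norm_eq_abs,
                  abs_of_nonneg (by linarith [hτ.2] : (0:ℝ) ≤ x ^ m - τ)]
                linarith [hτ.1]
              have hfact : (x ^ m - τ) * fderiv ℝ (ψ n) (x, τ) (0, 1)
                  - (x ^ m - τ) * Dt (x, τ)
                  = (x ^ m - τ) * (fderiv ℝ (ψ n) (x, τ) (0, 1) - Dt (x, τ)) := by ring
              rw [hfact]
              have h2 : (‖x ^ m - τ‖₊ : ℝ≥0∞) ≤ 2 := by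
                rw [show ((‖x ^ m - τ‖₊ : ℝ≥0∞)) = ENNReal.ofReal ‖x ^ m - τ‖ from (ofReal_norm _).symm]
                calc ENNReal.ofReal ‖x ^ m - τ‖ ≤ ENNReal.ofReal 2 :=
                      ENNReal.ofReal_le_ofReal habs
                  _ = 2 := by norm_num
              calc (‖(x ^ m - τ) * (fderiv ℝ (ψ n) (x, τ) (0, 1) - Dt (x, τ))‖₊ : ℝ≥0∞)
                  = (‖x ^ m - τ‖₊ : ℝ≥0∞) * (‖Dt (x, τ)
                      - fderiv ℝ (ψ n) (x, τ) (0, 1)‖₊ : ℝ≥0∞) := by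
                    rw [nnnorm_mul,
                      show ‖fderiv ℝ (ψ n) (x, τ) (0, 1) - Dt (x, τ)‖₊
                        = ‖Dt (x, τ) - fderiv ℝ (ψ n) (x, τ) (0, 1)‖₊ by
                          rw [← nnnorm_neg, neg_sub]]
                    push_cast; ring
                _ ≤ 2 * F₂ (x, τ) := mul_le_mul_left h2 _
          _ = 2 * ∫⁻ τ in Ioo (-(x ^ m)) (x ^ m), F₂ (x, τ) :=
              lintegral_const_mul' 2 _ (by norm_num)
      have hsplit : A x - B x
          = (A x - ∫ y in Ioo (-(x ^ m)) (x ^ m), ψ n (x, y))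
            + ((∫ τ in Ioo (-(x ^ m)) (x ^ m),
                (x ^ m - τ) * fderiv ℝ (ψ n) (x, τ) (0, 1)) - B x) := by
        rw [← hiden]; ring
      calc (‖A x - B x‖₊ : ℝ≥0∞)
          = ‖(A x - ∫ y in Ioo (-(x ^ m)) (x ^ m), ψ n (x, y))
              + ((∫ τ in Ioo (-(x ^ m)) (x ^ m),
                  (x ^ m - τ) * fderiv ℝ (ψ n) (x, τ) (0, 1)) - B x)‖₊ := by
            rw [← hsplit]
        _ ≤ (‖A x - ∫ y in Ioo (-(x ^ m)) (x ^ m), ψ n (x, y)‖₊ : ℝ≥0∞)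
            + ‖(∫ τ in Ioo (-(x ^ m)) (x ^ m),
                (x ^ m - τ) * fderiv ℝ (ψ n) (x, τ) (0, 1)) - B x‖₊ := by
            exact_mod_cast nnnorm_add_le _ _
        _ ≤ (∫⁻ y in Ioo (-(x ^ m)) (x ^ m), F₁ (x, y))
            + 2 * ∫⁻ τ in Ioo (-(x ^ m)) (x ^ m), F₂ (x, τ) := add_le_add key1 key2
        _ = g₁ x + 2 * g₂ x := by rw [hg₁x x hx01, hg₂x x hx01]
    have hbound₁ : (∫⁻ x, g₁ x)
        ≤ eLpNorm (fun z => u₁ z - ψ n z) (ENNReal.ofReal p)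
            (volume.restrict (cuspDomain m)) * M := by
      have e1 : (∫⁻ x, g₁ x) = ∫⁻ z in S18.Sm m, F₁ z := by
        simp only [hg₁]
        rw [← lintegral_prod _ ((hF₁m.indicator (S18.Sm_measurable hm.le)).aemeasurable),
          ← Measure.volume_eq_prod, lintegral_indicator (S18.Sm_measurable hm.le)]
      calc (∫⁻ x, g₁ x) = ∫⁻ z in S18.Sm m, F₁ z := e1
        _ ≤ ∫⁻ z in cuspDomain m, F₁ z := lintegral_mono_set (S18.Sm_subset m)
        _ = ∫⁻ z in cuspDomain m, (‖u₁ z - ψ n z‖₊ : ℝ≥0∞) := by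
            apply lintegral_congr_ae
            filter_upwards [hut_ae] with z hz
            simp only [hF₁]
            rw [hz]
        _ ≤ _ := key _ (hu_mem.1.sub hψc.aestronglyMeasurable)
    have hbound₂ : (∫⁻ x, g₂ x)
        ≤ eLpNorm (fun z => du₁ z (0, 1) - fderiv ℝ (ψ n) z (0, 1)) (ENNReal.ofReal p)
            (volume.restrict (cuspDomain m)) * M := by
      have e1 : (∫⁻ x, g₂ x) = ∫⁻ z in S18.Sm m, F₂ z := by
        simp only [hg₂]
        rw [← lintegral_prod _ ((hF₂m.indicator (S18.Sm_measurable hm.le)).aemeasurable),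
          ← Measure.volume_eq_prod, lintegral_indicator (S18.Sm_measurable hm.le)]
      calc (∫⁻ x, g₂ x) = ∫⁻ z in S18.Sm m, F₂ z := e1
        _ ≤ ∫⁻ z in cuspDomain m, F₂ z := lintegral_mono_set (S18.Sm_subset m)
        _ = ∫⁻ z in cuspDomain m,
              (‖du₁ z (0, 1) - fderiv ℝ (ψ n) z (0, 1)‖₊ : ℝ≥0∞) := by
            apply lintegral_congr_ae
            filter_upwards [hDt_ae] with z hz
            simp only [hF₂]
            rw [hz]
        _ ≤ _ := key _ (hD_mem.1.sub hdψc.aestronglyMeasurable)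
    calc (∫⁻ x in Ioo (0:ℝ) 1, (‖A x - B x‖₊ : ℝ≥0∞))
        ≤ ∫⁻ x in Ioo (0:ℝ) 1, (g₁ x + 2 * g₂ x) := lintegral_mono_ae step1
      _ ≤ ∫⁻ x, (g₁ x + 2 * g₂ x) := setLIntegral_le_lintegral _ _
      _ = (∫⁻ x, g₁ x) + 2 * ∫⁻ x, g₂ x := by
          rw [lintegral_add_left hg₁m, lintegral_const_mul 2 hg₂m]
      _ ≤ _ := add_le_add hbound₁ (mul_le_mul_right hbound₂ 2)
  -- pass to the limit
  have htend : Tendsto (fun n =>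
      eLpNorm (fun z => u₁ z - ψ n z) (ENNReal.ofReal p)
        (volume.restrict (cuspDomain m)) * M
      + 2 * (eLpNorm (fun z => du₁ z (0, 1) - fderiv ℝ (ψ n) z (0, 1))
          (ENNReal.ofReal p) (volume.restrict (cuspDomain m)) * M))
      atTop (𝓝 0) := by
    have h1 := ENNReal.Tendsto.mul_const hψ0 (Or.inr hM_ne)
    have h2 := ENNReal.Tendsto.const_mul (a := 2)
      (ENNReal.Tendsto.mul_const (hψ1 (0, 1)) (Or.inr hM_ne)) (by norm_num)
    simpa using h1.add h2
  have hE0 : (∫⁻ x in Ioo (0:ℝ) 1, (‖A x - B x‖₊ : ℝ≥0∞)) = 0 :=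
    le_antisymm (ge_of_tendsto' htend main) zero_le
  have hA_aesm : AEStronglyMeasurable A (volume.restrict (Ioo (0:ℝ) 1)) := by
    refine hA'_sm.aestronglyMeasurable.congr ?_
    filter_upwards [ae_restrict_mem measurableSet_Ioo] with x hx
    exact (hA'eq x hx).symm
  have hB_aesm : AEStronglyMeasurable B (volume.restrict (Ioo (0:ℝ) 1)) := by
    refine hB'_sm.aestronglyMeasurable.congr ?_
    filter_upwards [ae_restrict_mem measurableSet_Ioo] with x hx
    exact (hB'eq x hx).symm
  have hABae : ∀ᵐ x ∂volume.restrict (Ioo (0:ℝ) 1), A x = B x := by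
    have h := (lintegral_eq_zero_iff' ((hA_aesm.sub hB_aesm).enorm)).1 hE0
    filter_upwards [h] with x hx
    have hx' : ‖A x - B x‖₊ = 0 := by
      have h0 : ((‖A x - B x‖₊ : ℝ≥0∞)) = 0 := by simpa using hx
      exact_mod_cast h0
    rwa [nnnorm_eq_zero, sub_eq_zero] at hx'
  -- conclusion
  filter_upwards [hABae, ae_restrict_of_ae h_sl_u_eq, ae_restrict_of_ae h_sl_D_eq,
    ae_restrict_of_ae h_sl_Dt_mem, ae_restrict_mem measurableSet_Ioo]
    with x hAB hueq hDeq hDmem hx01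
  have hueq' := hueq hx01
  have hDeq' := hDeq hx01
  have hDmem' := hDmem hx01
  have ha0 : (0:ℝ) < x ^ m := Real.rpow_pos_of_pos hx01.1 m
  have hu_int_eq : (∫ y in Ioo (-(x ^ m)) (x ^ m), u₁ (x, y)) = A x := by
    simp only [hA]
    exact integral_congr_ae hueq'
  have hw_int_eq : (∫ τ in Ioo (-(x ^ m)) (x ^ m), (x ^ m - τ) * du₁ (x, τ) (0, 1)) = B x := by
    simp only [hB]
    apply integral_congr_ae
    filter_upwards [hDeq'] with τ hτ
    rw [hτ]
  have hPint_eq : (∫ τ in Ioo (-(x ^ m)) (x ^ m), |du₁ (x, τ) (0, 1)| ^ p)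
      = ∫ τ in Ioo (-(x ^ m)) (x ^ m), |Dt (x, τ)| ^ p := by
    apply integral_congr_ae
    filter_upwards [hDeq'] with τ hτ
    rw [hτ]
  constructor
  · rw [hu_int_eq, hw_int_eq, hAB]
  · rw [hu_int_eq, hAB, hPint_eq]
    have hhold := S18.holder_slice hp1 ha0 hDmem'
    have hBform : |B x| ≤ ((2 * x ^ m) ^ ((2 * p - 1) / p)
        * ((p - 1) / (2 * p - 1)) ^ ((p - 1) / p)) *
        (∫ τ in Ioo (-(x ^ m)) (x ^ m), |Dt (x, τ)| ^ p) ^ (1 / p) := by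
      simp only [hB]
      exact hhold
    refine hBform.trans_eq ?_
    have h1 : (2 * x ^ m) ^ ((2 * p - 1) / p)
        = 2 ^ ((2 * p - 1) / p) * (x ^ m) ^ ((2 * p - 1) / p) :=
      Real.mul_rpow (by norm_num) ha0.le
    have h2 : (x ^ m) ^ ((2 * p - 1) / p) = x ^ (m * ((2 * p - 1) / p)) :=
      (Real.rpow_mul hx01.1.le m _).symm
    have h3 : m * ((2 * p - 1) / p) = m * (2 * p - 1) / p := (mul_div_assoc m _ p).symm
    rw [h1, h2, h3]
    ring
end
end
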